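/- arXiv:2502.18475 — 4 statements merged into one kernel-verified Lean document; each statement's English description precedes it below -/
import Mathlib

section
/- Fix η ∈ ℝ^m and assume the local domination hypothesis at η. Then the function η' ↦ uKL(q_{η'} ∣ π) (restricted to the set where it is finite, which contains a neighbourhood of η) is differentiable at η, its gradient equals ∫ s(x)(η⬝s(x) − f(x)) e^{η⬝s(x)} dμ(x), and this gradient is zero if and only if (∫ s(x) s(x)ᵀ e^{η⬝s(x)} dμ(x)) η = ∫ f(x) s(x) e^{η⬝s(x)} dμ(x); equivalently, dividing by Z_η, if and only if F_η η = z_η. -/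
/-!
Write `t = η' ⬝ᵥ s x`. Since `∫ q_{η'} (t - f) - ∫ q_{η'} = ∫ e^t (t - f - 1)` and
`d/dt (e^t (t - f - 1)) = (t - f) e^t`, the gradient is obtained by differentiating
`η' ↦ ∫ e^{η'⬝s} (η'⬝s - f - 1) dμ` under the integral sign. The domination hypothesis holds
for each `η'` only almost everywhere; by continuity in `η'` it transfers from a countable dense
subset of a ball around `η` to the whole ball, which gives one integrable bound for all the
derivatives there. Expanding `η ⬝ᵥ s` inside the gradient turns it into
`(∫ s sᵀ q_η) η - ∫ f s q_η`, and `Z_η > 0` because `μ ≠ 0`.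
-/

open MeasureTheory Matrix

noncomputable section

/-- The continuous linear functional `v ↦ g ⬝ᵥ v` on `ℝ^m`, used to express gradients. -/
def dotCLM {m : ℕ} (g : Fin m → ℝ) : (Fin m → ℝ) →L[ℝ] ℝ :=
  ∑ i, g i • ContinuousLinearMap.proj i

open Filter Topology

section DotCLM

variable {m : ℕ}

lemma dotCLM_apply (w v : Fin m → ℝ) : dotCLM w v = w ⬝ᵥ v := by
  simp [dotCLM, dotProduct]

lemma continuous_dotCLM : Continuous (dotCLM : (Fin m → ℝ) → (Fin m → ℝ) →L[ℝ] ℝ) := by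
  unfold dotCLM
  fun_prop

lemma hasFDerivAt_dotProduct_left (w η : Fin m → ℝ) :
    HasFDerivAt (fun η' => η' ⬝ᵥ w) (dotCLM w) η := by
  convert (dotCLM w).hasFDerivAt using 1
  ext v
  rw [dotCLM_apply, dotProduct_comm]

lemma sq_le_sum_sq (w : Fin m → ℝ) (i : Fin m) : w i ^ 2 ≤ ∑ j, w j ^ 2 :=
  Finset.single_le_sum (fun j _ => sq_nonneg (w j)) (Finset.mem_univ i)

lemma abs_le_one_add_sum_sq (w : Fin m → ℝ) (i : Fin m) : |w i| ≤ 1 + ∑ j, w j ^ 2 := by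
  nlinarith [sq_le_sum_sq w i, sq_abs (w i), sq_nonneg (|w i| - 1)]

lemma abs_mul_le_one_add_sum_sq (w : Fin m → ℝ) (i j : Fin m) :
    |w i * w j| ≤ 1 + ∑ k, w k ^ 2 := by
  rw [abs_mul]
  nlinarith [sq_le_sum_sq w i, sq_le_sum_sq w j, sq_abs (w i), sq_abs (w j),
    sq_nonneg (|w i| - |w j|)]

lemma norm_dotCLM_le (w : Fin m → ℝ) : ‖dotCLM w‖ ≤ m * (1 + ∑ i, w i ^ 2) := by
  refine ContinuousLinearMap.opNorm_le_bound _ (by positivity) fun v => ?_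
  rw [dotCLM_apply, dotProduct]
  calc ‖∑ i, w i * v i‖ ≤ ∑ i, |w i| * ‖v‖ := by
        refine (norm_sum_le _ _).trans (Finset.sum_le_sum fun i _ => ?_)
        rw [norm_mul, Real.norm_eq_abs]
        exact mul_le_mul_of_nonneg_left (norm_le_pi_norm v i) (abs_nonneg _)
    _ ≤ ∑ _i : Fin m, (1 + ∑ j, w j ^ 2) * ‖v‖ := by
        gcongr with i; exact abs_le_one_add_sum_sq w i
    _ = m * (1 + ∑ i, w i ^ 2) * ‖v‖ := by simp [mul_assoc]

lemma integral_smul_dotCLM {X : Type*} [MeasurableSpace X] {μ : Measure X} {c : X → ℝ}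
    {w : X → Fin m → ℝ} (hint : ∀ i, Integrable (fun x => w x i * c x) μ) :
    ∫ x, c x • dotCLM (w x) ∂μ = dotCLM fun i => ∫ x, w x i * c x ∂μ := by
  have h : ∀ x, c x • dotCLM (w x) = ∑ i, (w x i * c x) • ContinuousLinearMap.proj i := by
    intro x
    simp only [dotCLM, Finset.smul_sum, smul_smul, mul_comm]
  simp only [h]
  rw [integral_finsetSum _ fun i _ => (hint i).smul_const _]
  exact Finset.sum_congr rfl fun i _ => integral_smul_const _ _

lemma hasFDerivAt_exp_dotProduct_mul (w : Fin m → ℝ) (c : ℝ) (η : Fin m → ℝ) :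
    HasFDerivAt (fun η' => Real.exp (η' ⬝ᵥ w) * (η' ⬝ᵥ w - c - 1))
      (((η ⬝ᵥ w - c) * Real.exp (η ⬝ᵥ w)) • dotCLM w) η := by
  have h := ((hasDerivAt_id' (η ⬝ᵥ w)).exp).mul
    (((hasDerivAt_id' (η ⬝ᵥ w)).sub_const c).sub_const 1)
  exact (h.congr_deriv (by ring : _ = (η ⬝ᵥ w - c) * Real.exp (η ⬝ᵥ w))).comp_hasFDerivAt η
    (hasFDerivAt_dotProduct_left w η)

end DotCLM

lemma ae_forall_mem_le_of_continuous {X Y : Type*} [MeasurableSpace X] {μ : Measure X}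
    [TopologicalSpace Y] [TopologicalSpace.SeparableSpace Y] {V : Set Y} (hV : IsOpen V)
    {F : Y → X → ℝ} {G : X → ℝ} (hF : ∀ x, Continuous fun y => F y x)
    (h : ∀ y ∈ V, ∀ᵐ x ∂μ, F y x ≤ G x) : ∀ᵐ x ∂μ, ∀ y ∈ V, F y x ≤ G x := by
  obtain ⟨D, hDc, hDd⟩ := TopologicalSpace.exists_countable_dense Y
  have hD : ∀ᵐ x ∂μ, ∀ y ∈ V ∩ D, F y x ≤ G x :=
    (ae_ball_iff (hDc.mono Set.inter_subset_right)).2 fun y hy => h y hy.1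
  filter_upwards [hD] with x hx y hy
  exact (isClosed_le (hF x) continuous_const).closure_subset_iff.2 hx
    (hDd.open_subset_closure_inter hV hy)

-- The left-hand side of the local domination hypothesis, at `w = s x`, `c = f x`.
def klEnvelope {m : ℕ} (w : Fin m → ℝ) (c : ℝ) (η : Fin m → ℝ) : ℝ :=
  (1 + ∑ i, w i ^ 2) * (1 + |η ⬝ᵥ w| + |c|) * Real.exp (η ⬝ᵥ w)

section Envelope

variable {m : ℕ} {w : Fin m → ℝ} {c : ℝ} {η : Fin m → ℝ}

lemma continuous_klEnvelope (w : Fin m → ℝ) (c : ℝ) : Continuous (klEnvelope w c) := by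
  unfold klEnvelope
  fun_prop

lemma abs_mul_mul_exp_le_klEnvelope {a b : ℝ} (ha : |a| ≤ 1 + ∑ i, w i ^ 2)
    (hb : |b| ≤ 1 + |η ⬝ᵥ w| + |c|) : |a * b * Real.exp (η ⬝ᵥ w)| ≤ klEnvelope w c η := by
  rw [abs_mul, abs_mul, Real.abs_exp]
  exact mul_le_mul_of_nonneg_right (mul_le_mul ha hb (abs_nonneg b) ((abs_nonneg a).trans ha))
    (Real.exp_pos _).le

lemma norm_smul_dotCLM_le_klEnvelope {b : ℝ} (hb : |b| ≤ 1 + |η ⬝ᵥ w| + |c|) :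
    ‖(b * Real.exp (η ⬝ᵥ w)) • dotCLM w‖ ≤ m * klEnvelope w c η := by
  rw [norm_smul, Real.norm_eq_abs, abs_mul, Real.abs_exp, klEnvelope]
  calc |b| * Real.exp (η ⬝ᵥ w) * ‖dotCLM w‖
      ≤ (1 + |η ⬝ᵥ w| + |c|) * Real.exp (η ⬝ᵥ w) * (m * (1 + ∑ i, w i ^ 2)) := by
        gcongr; exact norm_dotCLM_le w
    _ = _ := by ring

lemma abs_sub_le_one_add_abs_add_abs (t c : ℝ) : |t - c| ≤ 1 + |t| + |c| := by
  linarith [abs_sub t c]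

lemma abs_sub_sub_one_le_one_add_abs_add_abs (t c : ℝ) : |t - c - 1| ≤ 1 + |t| + |c| := by
  linarith [abs_sub (t - c) 1, abs_sub t c, abs_one (α := ℝ)]

lemma abs_one_le_one_add_abs_add_abs (t c : ℝ) : |(1 : ℝ)| ≤ 1 + |t| + |c| := by
  rw [abs_one]
  linarith [abs_nonneg t, abs_nonneg c]

end Envelope

lemma Measurable.const_dotProduct {X : Type*} [MeasurableSpace X] {m : ℕ} {s : X → Fin m → ℝ}
    (hs : Measurable s) (η : Fin m → ℝ) : Measurable fun x => η ⬝ᵥ s x :=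
  (continuous_const.dotProduct continuous_id).measurable.comp hs

section Integrals

variable {X : Type*} [MeasurableSpace X] {μ : Measure X} {m : ℕ} {s : X → Fin m → ℝ}
  {f g : X → ℝ} {η : Fin m → ℝ}

lemma integrable_mul_mul_exp_of_klEnvelope_le (hs : Measurable s) (hg : Integrable g μ)
    (hdom : ∀ᵐ x ∂μ, klEnvelope (s x) (f x) η ≤ g x) {a b : X → ℝ} (ha : Measurable a)
    (hb : Measurable b) (ha_le : ∀ x, |a x| ≤ 1 + ∑ i, s x i ^ 2)
    (hb_le : ∀ x, |b x| ≤ 1 + |η ⬝ᵥ s x| + |f x|) :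
    Integrable (fun x => a x * b x * Real.exp (η ⬝ᵥ s x)) μ := by
  refine hg.mono' ((ha.mul hb).mul (hs.const_dotProduct η).exp).aestronglyMeasurable ?_
  filter_upwards [hdom] with x hx
  exact (abs_mul_mul_exp_le_klEnvelope (ha_le x) (hb_le x)).trans hx

lemma integrable_mul_exp_of_klEnvelope_le (hs : Measurable s) (hg : Integrable g μ)
    (hdom : ∀ᵐ x ∂μ, klEnvelope (s x) (f x) η ≤ g x) {b : X → ℝ} (hb : Measurable b)
    (hb_le : ∀ x, |b x| ≤ 1 + |η ⬝ᵥ s x| + |f x|) :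
    Integrable (fun x => b x * Real.exp (η ⬝ᵥ s x)) μ := by
  simpa only [one_mul] using integrable_mul_mul_exp_of_klEnvelope_le hs hg hdom
    (a := fun _ => 1) measurable_const hb
    (fun x => by rw [abs_one]; exact le_add_of_nonneg_right (by positivity)) hb_le

lemma integrable_exp_dotProduct_of_klEnvelope_le (hs : Measurable s) (hg : Integrable g μ)
    (hdom : ∀ᵐ x ∂μ, klEnvelope (s x) (f x) η ≤ g x) :
    Integrable (fun x => Real.exp (η ⬝ᵥ s x)) μ := by
  simpa only [one_mul] using integrable_mul_exp_of_klEnvelope_le hs hg hdom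
    (b := fun _ => 1) measurable_const
    fun x => abs_one_le_one_add_abs_add_abs _ _

lemma integral_exp_mul_sub_add_sub_eq (hs : Measurable s) (hf : Measurable f)
    (hg : Integrable g μ) (hdom : ∀ᵐ x ∂μ, klEnvelope (s x) (f x) η ≤ g x) (P : ℝ) :
    (∫ x, Real.exp (η ⬝ᵥ s x) * (η ⬝ᵥ s x - f x) ∂μ) + P - ∫ x, Real.exp (η ⬝ᵥ s x) ∂μ
      = (∫ x, Real.exp (η ⬝ᵥ s x) * (η ⬝ᵥ s x - f x - 1) ∂μ) + P := by
  have hint := (integrable_mul_exp_of_klEnvelope_le hs hg hdom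
    (b := fun x => η ⬝ᵥ s x - f x) ((hs.const_dotProduct η).sub hf)
    fun x => abs_sub_le_one_add_abs_add_abs _ _).congr (.of_forall fun x => mul_comm _ _)
  rw [add_sub_right_comm, ← integral_sub hint
    (integrable_exp_dotProduct_of_klEnvelope_le hs hg hdom)]
  congr 2 with x
  ring

lemma hasFDerivAt_integral_exp_mul_sub_sub_one (hs : Measurable s) (hf : Measurable f)
    (hg : Integrable g μ) {ε : ℝ} (hε : 0 < ε)
    (hdom : ∀ᵐ x ∂μ, ∀ η' ∈ Metric.ball η ε, klEnvelope (s x) (f x) η' ≤ g x) :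
    HasFDerivAt (fun η' => ∫ x, Real.exp (η' ⬝ᵥ s x) * (η' ⬝ᵥ s x - f x - 1) ∂μ)
      (dotCLM fun i => ∫ x, s x i * (η ⬝ᵥ s x - f x) * Real.exp (η ⬝ᵥ s x) ∂μ) η := by
  have hdomη : ∀ᵐ x ∂μ, klEnvelope (s x) (f x) η ≤ g x :=
    hdom.mono fun x hx => hx η (Metric.mem_ball_self hε)
  have hF_int : Integrable (fun x => Real.exp (η ⬝ᵥ s x) * (η ⬝ᵥ s x - f x - 1)) μ :=
    (integrable_mul_exp_of_klEnvelope_le hs hg hdomη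
      (((hs.const_dotProduct η).sub hf).sub_const 1)
      fun x => abs_sub_sub_one_le_one_add_abs_add_abs _ _).congr
      (.of_forall fun x => mul_comm _ _)
  have key := hasFDerivAt_integral_of_dominated_of_fderiv_le
    (F := fun η' x => Real.exp (η' ⬝ᵥ s x) * (η' ⬝ᵥ s x - f x - 1))
    (F' := fun η' x => ((η' ⬝ᵥ s x - f x) * Real.exp (η' ⬝ᵥ s x)) • dotCLM (s x))
    (bound := fun x => m * g x) (Metric.ball_mem_nhds η hε)
    (.of_forall fun η' => (((hs.const_dotProduct η').exp).mul
      (((hs.const_dotProduct η').sub hf).sub_const 1)).aestronglyMeasurable)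
    hF_int
    ((((hs.const_dotProduct η).sub hf).mul (hs.const_dotProduct η).exp).aestronglyMeasurable.smul
      (continuous_dotCLM.comp_aestronglyMeasurable hs.aestronglyMeasurable))
    (hdom.mono fun x hx η' hη' => (norm_smul_dotCLM_le_klEnvelope
      (abs_sub_le_one_add_abs_add_abs _ _)).trans (by gcongr; exact hx η' hη'))
    (hg.const_mul m)
    (.of_forall fun x η' _ => hasFDerivAt_exp_dotProduct_mul (s x) (f x) η')
  rw [integral_smul_dotCLM fun i => ?_] at key
  · simpa only [mul_assoc] using key
  · exact (integrable_mul_mul_exp_of_klEnvelope_le hs hg hdomη hs.eval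
      ((hs.const_dotProduct η).sub hf) (fun x => abs_le_one_add_sum_sq (s x) i)
      fun x => abs_sub_le_one_add_abs_add_abs _ _).congr (.of_forall fun x => mul_assoc _ _ _)

lemma integral_mul_sub_mul_exp_eq_mulVec_sub (hs : Measurable s) (hf : Measurable f)
    (hg : Integrable g μ) (hdom : ∀ᵐ x ∂μ, klEnvelope (s x) (f x) η ≤ g x) :
    (fun i => ∫ x, s x i * (η ⬝ᵥ s x - f x) * Real.exp (η ⬝ᵥ s x) ∂μ)
      = (Matrix.of fun i j => ∫ x, s x i * s x j * Real.exp (η ⬝ᵥ s x) ∂μ) *ᵥ η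
        - fun i => ∫ x, f x * s x i * Real.exp (η ⬝ᵥ s x) ∂μ := by
  have hss (i j : Fin m) : Integrable (fun x => s x i * s x j * Real.exp (η ⬝ᵥ s x)) μ := by
    simpa only [mul_one] using integrable_mul_mul_exp_of_klEnvelope_le hs hg hdom
      (a := fun x => s x i * s x j) (hs.eval.mul hs.eval) (b := fun _ => 1) measurable_const
      (fun x => abs_mul_le_one_add_sum_sq (s x) i j)
      fun x => abs_one_le_one_add_abs_add_abs _ _
  have hfs (i : Fin m) : Integrable (fun x => f x * s x i * Real.exp (η ⬝ᵥ s x)) μ :=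
    (integrable_mul_mul_exp_of_klEnvelope_le hs hg hdom hs.eval hf
      (fun x => abs_le_one_add_sum_sq (s x) i)
      (fun x => by linarith [abs_nonneg (η ⬝ᵥ s x)])).congr
      (.of_forall fun x => by ring)
  ext i
  calc ∫ x, s x i * (η ⬝ᵥ s x - f x) * Real.exp (η ⬝ᵥ s x) ∂μ
      = ∫ x, (∑ j, s x i * s x j * Real.exp (η ⬝ᵥ s x) * η j)
          - f x * s x i * Real.exp (η ⬝ᵥ s x) ∂μ := by
        congr 1 with x
        simp only [dotProduct, Finset.mul_sum, Finset.sum_mul, mul_sub, sub_mul]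
        congr 1
        · exact Finset.sum_congr rfl fun j _ => by ring
        · ring
    _ = _ := by
        rw [integral_sub (integrable_finsetSum _ fun j _ => (hss i j).mul_const _) (hfs i),
          integral_finsetSum _ fun j _ => (hss i j).mul_const _]
        simp only [integral_mul_const]
        rfl

end Integrals

theorem stmt0_general
    {X : Type*} [MeasurableSpace X] (μ : Measure X)
    {m : ℕ} (s : X → Fin m → ℝ) (hs : Measurable s)
    (f : X → ℝ) (hf : Measurable f)
    (hπ0 : 0 < ∫ x, Real.exp (f x) ∂μ)
    (η : Fin m → ℝ)
    -- local domination hypothesis at `η`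
    (U : Set (Fin m → ℝ)) (hU : U ∈ nhds η)
    (g : X → ℝ) (hg : Integrable g μ)
    (hdom : ∀ η' ∈ U, ∀ᵐ x ∂μ,
      (1 + ∑ i, (s x i) ^ 2) * (1 + |η' ⬝ᵥ s x| + |f x|) * Real.exp (η' ⬝ᵥ s x) ≤ g x) :
    -- differentiability of `uKL` at `η` with the stated gradient
    HasFDerivAt
      (fun η' : Fin m → ℝ =>
        (∫ x, Real.exp (η' ⬝ᵥ s x) * (η' ⬝ᵥ s x - f x) ∂μ)
          + (∫ x, Real.exp (f x) ∂μ) - ∫ x, Real.exp (η' ⬝ᵥ s x) ∂μ)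
      (dotCLM fun i => ∫ x, s x i * (η ⬝ᵥ s x - f x) * Real.exp (η ⬝ᵥ s x) ∂μ) η
    ∧
    -- the gradient is zero iff `(∫ s sᵀ q_η dμ) η = ∫ f s q_η dμ`
    (((fun i => ∫ x, s x i * (η ⬝ᵥ s x - f x) * Real.exp (η ⬝ᵥ s x) ∂μ) = (0 : Fin m → ℝ))
      ↔ (Matrix.of fun i j => ∫ x, s x i * s x j * Real.exp (η ⬝ᵥ s x) ∂μ) *ᵥ η
          = fun i => ∫ x, f x * s x i * Real.exp (η ⬝ᵥ s x) ∂μ)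
    ∧
    -- equivalently, dividing by `Z_η`, iff `F_η η = z_η`
    (((fun i => ∫ x, s x i * (η ⬝ᵥ s x - f x) * Real.exp (η ⬝ᵥ s x) ∂μ) = (0 : Fin m → ℝ))
      ↔ ((∫ x, Real.exp (η ⬝ᵥ s x) ∂μ)⁻¹ •
            (Matrix.of fun i j => ∫ x, s x i * s x j * Real.exp (η ⬝ᵥ s x) ∂μ)) *ᵥ η
          = (∫ x, Real.exp (η ⬝ᵥ s x) ∂μ)⁻¹ •
            fun i => ∫ x, f x * s x i * Real.exp (η ⬝ᵥ s x) ∂μ) := by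
  obtain ⟨ε, hε, hball⟩ := Metric.mem_nhds_iff.1 hU
  have hdom_ball := ae_forall_mem_le_of_continuous Metric.isOpen_ball
    (fun x => continuous_klEnvelope (s x) (f x)) fun η' hη' => hdom η' (hball hη')
  have huKL : ∀ᶠ η' in 𝓝 η,
      (∫ x, Real.exp (η' ⬝ᵥ s x) * (η' ⬝ᵥ s x - f x) ∂μ) + (∫ x, Real.exp (f x) ∂μ)
        - ∫ x, Real.exp (η' ⬝ᵥ s x) ∂μ
      = (∫ x, Real.exp (η' ⬝ᵥ s x) * (η' ⬝ᵥ s x - f x - 1) ∂μ) + ∫ x, Real.exp (f x) ∂μ :=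
    mem_of_superset hU fun η' hη' => integral_exp_mul_sub_add_sub_eq hs hf hg (hdom η' hη') _
  have hdomη := hdom η (mem_of_mem_nhds hU)
  have hgrad := integral_mul_sub_mul_exp_eq_mulVec_sub hs hf hg hdomη
  have hZ : (∫ x, Real.exp (η ⬝ᵥ s x) ∂μ)⁻¹ ≠ 0 := by
    have : NeZero μ := ⟨by rintro rfl; simp at hπ0⟩
    exact inv_ne_zero
      (integral_exp_pos (integrable_exp_dotProduct_of_klEnvelope_le hs hg hdomη)).ne'
  refine ⟨((hasFDerivAt_integral_exp_mul_sub_sub_one hs hf hg hε hdom_ball).add_const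
    _).congr_of_eventuallyEq huKL, ?_, ?_⟩
  · rw [hgrad, sub_eq_zero]
  · rw [hgrad, sub_eq_zero, smul_mulVec, (smul_right_injective _ hZ).eq_iff]

/-- Under the local domination hypothesis at `η`, the unnormalised
KL objective `η' ↦ uKL(q_{η'} ∣ π)` is differentiable at `η`, its gradient equals
`∫ s(x) (η⬝s(x) − f(x)) e^{η⬝s(x)} dμ(x)`, and this gradient vanishes iff
`(∫ s sᵀ q_η dμ) η = ∫ f s q_η dμ`, equivalently (dividing by `Z_η`) iff `F_η η = z_η`. -/
theorem stmt0
    {X : Type*} [MeasurableSpace X] (μ : Measure X) [SigmaFinite μ]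
    {m : ℕ} [NeZero m] (s : X → Fin m → ℝ) (hs : Measurable s)
    (hs1 : ∀ x, s x 0 = 1)
    (f : X → ℝ) (hf : Measurable f)
    (hπ0 : 0 < ∫ x, Real.exp (f x) ∂μ)
    (hπ1 : Integrable (fun x => Real.exp (f x)) μ)
    (η : Fin m → ℝ)
    -- local domination hypothesis at `η`
    (U : Set (Fin m → ℝ)) (hU : U ∈ nhds η)
    (g : X → ℝ) (hg : Integrable g μ)
    (hdom : ∀ η' ∈ U, ∀ᵐ x ∂μ,
      (1 + ∑ i, (s x i) ^ 2) * (1 + |η' ⬝ᵥ s x| + |f x|) * Real.exp (η' ⬝ᵥ s x) ≤ g x) :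
    -- differentiability of `uKL` at `η` with the stated gradient
    HasFDerivAt
      (fun η' : Fin m → ℝ =>
        (∫ x, Real.exp (η' ⬝ᵥ s x) * (η' ⬝ᵥ s x - f x) ∂μ)
          + (∫ x, Real.exp (f x) ∂μ) - ∫ x, Real.exp (η' ⬝ᵥ s x) ∂μ)
      (dotCLM fun i => ∫ x, s x i * (η ⬝ᵥ s x - f x) * Real.exp (η ⬝ᵥ s x) ∂μ) η
    ∧
    -- the gradient is zero iff `(∫ s sᵀ q_η dμ) η = ∫ f s q_η dμ`
    (((fun i => ∫ x, s x i * (η ⬝ᵥ s x - f x) * Real.exp (η ⬝ᵥ s x) ∂μ) = (0 : Fin m → ℝ))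
      ↔ (Matrix.of fun i j => ∫ x, s x i * s x j * Real.exp (η ⬝ᵥ s x) ∂μ) *ᵥ η
          = fun i => ∫ x, f x * s x i * Real.exp (η ⬝ᵥ s x) ∂μ)
    ∧
    -- equivalently, dividing by `Z_η`, iff `F_η η = z_η`
    (((fun i => ∫ x, s x i * (η ⬝ᵥ s x - f x) * Real.exp (η ⬝ᵥ s x) ∂μ) = (0 : Fin m → ℝ))
      ↔ ((∫ x, Real.exp (η ⬝ᵥ s x) ∂μ)⁻¹ •
            (Matrix.of fun i j => ∫ x, s x i * s x j * Real.exp (η ⬝ᵥ s x) ∂μ)) *ᵥ η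
          = (∫ x, Real.exp (η ⬝ᵥ s x) ∂μ)⁻¹ •
            fun i => ∫ x, f x * s x i * Real.exp (η ⬝ᵥ s x) ∂μ) :=
  stmt0_general μ s hs f hf hπ0 η U hU g hg hdom
end
end

section
/- Write η = (η⁰, η̄) ∈ ℝ × ℝ^{m−1} and s = (1, s̄). Fix η and assume the local domination hypothesis at η. If the partial derivative of η ↦ uKL(q_η ∣ π) with respect to the first coordinate η⁰ vanishes at η, then η⁰ = Z_η⁻¹ ∫ (f(x) − η̄ ⬝ s̄(x)) e^{η⬝s(x)} dμ(x), i.e. η⁰ equals the expectation of f − η̄⬝s̄ under the probability density q_η / Z_η. -/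
/-! Write `r = η̄ ⬝ s̄`, so that on the line through `η` in the first coordinate
`η ⬝ s = t + r`. Differentiating under the integral sign, the `t`-derivative of `uKL` is
`∫ e^{t+r} (t + r - f)`: the derivative of `∫ e^{t+r} (t + r - f)` exceeds it by exactly
`∫ e^{t+r}`, which the mass term removes. Because `e^{t+r}` increases with `t`, the domination
hypothesis at a single point `η⁰ + ε` already dominates the integrands uniformly for
`|t - η⁰| < ε`. Setting the derivative to zero gives `η⁰ Z_η = ∫ (f - r) e^{η⬝s}`. -/

open MeasureTheory Matrix Real Metric Filter Topology

lemma Matrix.update_dotProduct_of_eq_one {n : Type*} [Fintype n] [DecidableEq n]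
    (η v : n → ℝ) {i : n} (hv : v i = 1) (t : ℝ) :
    Function.update η i t ⬝ᵥ v = t + ∑ j ∈ Finset.univ.erase i, η j * v j := by
  rw [dotProduct, ← Finset.add_sum_erase _ _ (Finset.mem_univ i), Function.update_self, hv,
    mul_one]
  congr 1
  exact Finset.sum_congr rfl fun j hj => by
    rw [Function.update_of_ne (Finset.ne_of_mem_erase hj)]

lemma Real.exp_mul_one_add_abs_add_le {u v c : ℝ} (huv : u ≤ v) (hc : 0 ≤ c) :
    exp u * (1 + |u| + c) ≤ (1 + (v - u)) * (exp v * (1 + |v| + c)) := by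
  have habs : |u| ≤ |v| + (v - u) := by
    have := abs_sub_abs_le_abs_sub u v
    rw [abs_sub_comm, abs_of_nonneg (sub_nonneg.2 huv)] at this
    linarith
  calc exp u * (1 + |u| + c) ≤ exp v * ((1 + (v - u)) * (1 + |v| + c)) := by
        gcongr
        nlinarith [abs_nonneg v, sub_nonneg.2 huv]
    _ = (1 + (v - u)) * (exp v * (1 + |v| + c)) := by ring

lemma eq_weighted_mean_of_integral_mul_sub_eq_zero {X : Type*} [MeasurableSpace X]
    {μ : Measure X} {w h : X → ℝ} {a : ℝ} (hμ : μ ≠ 0) (hw : ∀ x, 0 < w x)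
    (hw_int : Integrable w μ) (hwd_int : Integrable (fun x => w x * (a - h x)) μ)
    (h0 : ∫ x, w x * (a - h x) ∂μ = 0) :
    a = (∫ x, w x ∂μ)⁻¹ * ∫ x, h x * w x ∂μ := by
  have hZ : 0 < ∫ x, w x ∂μ := by
    rw [integral_pos_iff_support_of_nonneg (fun x => (hw x).le) hw_int,
      Function.support_eq_univ fun x => (hw x).ne']
    exact Measure.measure_univ_pos.2 hμ
  have hmean : ∫ x, h x * w x ∂μ = a * ∫ x, w x ∂μ - ∫ x, w x * (a - h x) ∂μ := by
    rw [← integral_const_mul, ← integral_sub (hw_int.const_mul a) hwd_int]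
    exact integral_congr_ae (Eventually.of_forall fun x => by ring)
  rw [eq_inv_mul_iff_mul_eq₀ hZ.ne', hmean, h0]
  ring

section ExpFamilyLine

variable {X : Type*} [MeasurableSpace X] {μ : Measure X} {r f g : X → ℝ} {t₀ b : ℝ}

lemma ae_forall_ball_exp_mul_le (hb : t₀ < b)
    (hdom : ∀ᵐ x ∂μ, exp (b + r x) * (1 + |b + r x| + |f x|) ≤ g x) :
    ∀ᵐ x ∂μ, ∀ t ∈ ball t₀ (b - t₀),
      exp (t + r x) * (1 + |t + r x| + |f x|) ≤ (1 + 2 * (b - t₀)) * g x := by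
  filter_upwards [hdom] with x hx t ht
  rw [mem_ball, Real.dist_eq, abs_lt] at ht
  have hshift := exp_mul_one_add_abs_add_le (c := |f x|)
    (show t + r x ≤ b + r x by linarith) (abs_nonneg _)
  calc exp (t + r x) * (1 + |t + r x| + |f x|)
      ≤ (1 + (b + r x - (t + r x))) * (exp (b + r x) * (1 + |b + r x| + |f x|)) := hshift
    _ ≤ (1 + 2 * (b - t₀)) * g x := by
      gcongr
      linarith

lemma integrable_exp_mul_of_mem_ball (hr : AEStronglyMeasurable r μ) (hg : Integrable g μ)
    (hb : t₀ < b) (hdom : ∀ᵐ x ∂μ, exp (b + r x) * (1 + |b + r x| + |f x|) ≤ g x)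
    {t : ℝ} (ht : t ∈ ball t₀ (b - t₀)) {p : X → ℝ}
    (hp : AEStronglyMeasurable p μ) (hpf : ∀ x, |p x| ≤ 1 + |t + r x| + |f x|) :
    Integrable (fun x => exp (t + r x) * p x) μ := by
  refine (hg.const_mul (1 + 2 * (b - t₀))).mono' (by fun_prop) ?_
  filter_upwards [ae_forall_ball_exp_mul_le hb hdom] with x hx
  rw [norm_mul, Real.norm_of_nonneg (exp_pos _).le, Real.norm_eq_abs]
  exact (mul_le_mul_of_nonneg_left (hpf x) (exp_pos _).le).trans (hx t ht)

lemma integrable_exp_of_mem_ball (hr : AEStronglyMeasurable r μ) (hg : Integrable g μ)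
    (hb : t₀ < b) (hdom : ∀ᵐ x ∂μ, exp (b + r x) * (1 + |b + r x| + |f x|) ≤ g x)
    {t : ℝ} (ht : t ∈ ball t₀ (b - t₀)) :
    Integrable (fun x => exp (t + r x)) μ := by
  simpa using integrable_exp_mul_of_mem_ball hr hg hb hdom ht
    (p := fun _ => 1) aestronglyMeasurable_const fun x => by simp [add_assoc]; positivity

lemma abs_sub_sub_le_one_add (u a c : ℝ) (hc : |c| ≤ 1) : |u - a - c| ≤ 1 + |u| + |a| := by
  have := abs_sub (u - a) c
  have := abs_sub u a
  linarith

lemma hasDerivAt_integral_exp_mul_sub_add_sub_integral_exp (C : ℝ)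
    (hr : AEStronglyMeasurable r μ) (hf : AEStronglyMeasurable f μ) (hg : Integrable g μ)
    (hb : t₀ < b) (hdom : ∀ᵐ x ∂μ, exp (b + r x) * (1 + |b + r x| + |f x|) ≤ g x) :
    HasDerivAt
      (fun t => (∫ x, exp (t + r x) * (t + r x - f x) ∂μ) + C - ∫ x, exp (t + r x) ∂μ)
      (∫ x, exp (t₀ + r x) * (t₀ + r x - f x) ∂μ) t₀ := by
  have hball : ball t₀ (b - t₀) ∈ 𝓝 t₀ := ball_mem_nhds _ (sub_pos.2 hb)
  have hint : ∀ t ∈ ball t₀ (b - t₀), ∀ c : ℝ, |c| ≤ 1 →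
      Integrable (fun x => exp (t + r x) * (t + r x - f x - c)) μ := fun t ht c hc =>
    integrable_exp_mul_of_mem_ball hr hg hb hdom ht (by fun_prop)
      fun x => abs_sub_sub_le_one_add _ _ _ hc
  -- `e^u (u - f - 1)` is a primitive of `e^u (u - f)`, and it absorbs the `- ∫ e^u` term.
  have hderiv := hasDerivAt_integral_of_dominated_loc_of_deriv_le
    (F := fun t x => exp (t + r x) * (t + r x - f x - 1))
    (F' := fun t x => exp (t + r x) * (t + r x - f x)) hball
    (Eventually.of_forall fun t => by fun_prop)
    (hint t₀ (mem_ball_self (sub_pos.2 hb)) 1 (by simp))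
    (by fun_prop) ?bound (hg.const_mul (1 + 2 * (b - t₀))) ?diff
  case bound =>
    filter_upwards [ae_forall_ball_exp_mul_le hb hdom] with x hx t ht
    rw [norm_mul, Real.norm_of_nonneg (exp_pos _).le, Real.norm_eq_abs]
    have hpf := abs_sub_sub_le_one_add (t + r x) (f x) 0 (by simp)
    rw [sub_zero] at hpf
    exact (mul_le_mul_of_nonneg_left hpf (exp_pos _).le).trans (hx t ht)
  case diff =>
    refine Eventually.of_forall fun x t _ => ?_
    have hu : HasDerivAt (fun t => t + r x) 1 t := (hasDerivAt_id t).add_const _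
    exact (hu.exp.mul ((hu.sub_const (f x)).sub_const 1)).congr_deriv (by ring)
  refine (hderiv.2.add_const C).congr_of_eventuallyEq ?_
  filter_upwards [hball] with t ht
  have hsplit := integral_sub (hint t ht 0 (by simp))
    (integrable_exp_of_mem_ball hr hg hb hdom ht)
  simp only [sub_zero] at hsplit
  have hprim : ∫ x, exp (t + r x) * (t + r x - f x - 1) ∂μ
      = (∫ x, exp (t + r x) * (t + r x - f x) ∂μ) - ∫ x, exp (t + r x) ∂μ := by
    rw [← hsplit]
    exact integral_congr_ae (Eventually.of_forall fun x => by ring)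
  simp only [hprim]
  ring

lemma eq_exp_weighted_mean_of_hasDerivAt_eq_zero (hμ : μ ≠ 0) (C : ℝ)
    (hr : AEStronglyMeasurable r μ) (hf : AEStronglyMeasurable f μ) (hg : Integrable g μ)
    (hb : t₀ < b) (hdom : ∀ᵐ x ∂μ, exp (b + r x) * (1 + |b + r x| + |f x|) ≤ g x)
    (hcrit : HasDerivAt
      (fun t => (∫ x, exp (t + r x) * (t + r x - f x) ∂μ) + C - ∫ x, exp (t + r x) ∂μ) 0 t₀) :
    t₀ = (∫ x, exp (t₀ + r x) ∂μ)⁻¹ * ∫ x, (f x - r x) * exp (t₀ + r x) ∂μ := by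
  have hself : t₀ ∈ ball t₀ (b - t₀) := mem_ball_self (sub_pos.2 hb)
  have hrearrange : (fun x => exp (t₀ + r x) * (t₀ - (f x - r x)))
      = fun x => exp (t₀ + r x) * (t₀ + r x - f x) := by
    funext x
    ring
  have hF_int : Integrable (fun x => exp (t₀ + r x) * (t₀ + r x - f x)) μ :=
    integrable_exp_mul_of_mem_ball hr hg hb hdom hself (by fun_prop)
      fun x => by simpa using abs_sub_sub_le_one_add (t₀ + r x) (f x) 0 (by simp)
  refine eq_weighted_mean_of_integral_mul_sub_eq_zero hμ (fun x => exp_pos _)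
    (integrable_exp_of_mem_ball hr hg hb hdom hself) ?_ ?_
  · rwa [hrearrange]
  · rw [hrearrange]
    exact (hcrit.unique
      (hasDerivAt_integral_exp_mul_sub_add_sub_integral_exp C hr hf hg hb hdom)).symm

end ExpFamilyLine

lemma exists_lt_update_mem_of_mem_nhds {n : Type*} [DecidableEq n] {η : n → ℝ}
    {U : Set (n → ℝ)} (hU : U ∈ 𝓝 η) (i : n) :
    ∃ b, Function.update η i b ∈ U ∧ η i < b := by
  have hcont : Continuous (Function.update η i ·) := continuous_const.update i continuous_id
  have hV : (Function.update η i ·) ⁻¹' U ∈ 𝓝 (η i) :=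
    hcont.continuousAt.preimage_mem_nhds (by rwa [Function.update_eq_self])
  have hright : ∀ᶠ t in 𝓝[>] (η i), Function.update η i t ∈ U ∧ η i < t :=
    Eventually.and (mem_nhdsWithin_of_mem_nhds hV) self_mem_nhdsWithin
  exact hright.exists

theorem stmt1_general
    {X : Type*} [MeasurableSpace X] (μ : Measure X)
    {m : ℕ} [NeZero m] (s : X → Fin m → ℝ) (hs : Measurable s)
    (hs1 : ∀ x, s x 0 = 1)
    (f : X → ℝ) (hf : Measurable f)
    (hπ0 : 0 < ∫ x, Real.exp (f x) ∂μ)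
    (η : Fin m → ℝ)
    -- local domination hypothesis at `η`
    (U : Set (Fin m → ℝ)) (hU : U ∈ nhds η)
    (g : X → ℝ) (hg : Integrable g μ)
    (hdom : ∀ η' ∈ U, ∀ᵐ x ∂μ,
      (1 + ∑ i, (s x i) ^ 2) * (1 + |η' ⬝ᵥ s x| + |f x|) * Real.exp (η' ⬝ᵥ s x) ≤ g x)
    -- the partial derivative of `uKL` with respect to the first coordinate vanishes at `η`
    (hcrit : HasDerivAt
      (fun t : ℝ =>
        (∫ x, Real.exp (Function.update η 0 t ⬝ᵥ s x) * (Function.update η 0 t ⬝ᵥ s x - f x) ∂μ)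
          + (∫ x, Real.exp (f x) ∂μ) - ∫ x, Real.exp (Function.update η 0 t ⬝ᵥ s x) ∂μ)
      0 (η 0)) :
    η 0 = (∫ x, Real.exp (η ⬝ᵥ s x) ∂μ)⁻¹ *
      ∫ x, (f x - ∑ i ∈ Finset.univ.erase 0, η i * s x i) * Real.exp (η ⬝ᵥ s x) ∂μ := by
  set r : X → ℝ := fun x => ∑ i ∈ Finset.univ.erase 0, η i * s x i
  have hline : ∀ t x, Function.update η 0 t ⬝ᵥ s x = t + r x := fun t x =>
    update_dotProduct_of_eq_one η (s x) (hs1 x) t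
  have hr : Measurable r := by fun_prop
  obtain ⟨b, hbU, hb⟩ := exists_lt_update_mem_of_mem_nhds hU 0
  have hdom_b : ∀ᵐ x ∂μ, exp (b + r x) * (1 + |b + r x| + |f x|) ≤ g x := by
    filter_upwards [hdom _ hbU] with x hx
    rw [hline] at hx
    calc exp (b + r x) * (1 + |b + r x| + |f x|)
        = 1 * (1 + |b + r x| + |f x|) * exp (b + r x) := by ring
      _ ≤ (1 + ∑ i, s x i ^ 2) * (1 + |b + r x| + |f x|) * exp (b + r x) := by
        gcongr
        exact le_add_of_nonneg_right (by positivity)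
      _ ≤ g x := hx
  have hμ : μ ≠ 0 := by
    rintro rfl
    simp at hπ0
  have hηs : ∀ x, η ⬝ᵥ s x = η 0 + r x := fun x => by simpa using hline (η 0) x
  simp only [hline] at hcrit
  simp only [hηs]
  exact eq_exp_weighted_mean_of_hasDerivAt_eq_zero hμ _ hr.aestronglyMeasurable
    hf.aestronglyMeasurable hg hb hdom_b hcrit

/-- Write `η = (η⁰, η̄)` and `s = (1, s̄)`. Under the local domination
hypothesis at `η`, if the partial derivative of `η ↦ uKL(q_η ∣ π)` with respect to the
first coordinate `η⁰` vanishes at `η`, then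
`η⁰ = Z_η⁻¹ ∫ (f(x) − η̄ ⬝ s̄(x)) e^{η⬝s(x)} dμ(x)`. -/
theorem stmt1
    {X : Type*} [MeasurableSpace X] (μ : Measure X) [SigmaFinite μ]
    {m : ℕ} [NeZero m] (s : X → Fin m → ℝ) (hs : Measurable s)
    (hs1 : ∀ x, s x 0 = 1)
    (f : X → ℝ) (hf : Measurable f)
    (hπ0 : 0 < ∫ x, Real.exp (f x) ∂μ)
    (hπ1 : Integrable (fun x => Real.exp (f x)) μ)
    (η : Fin m → ℝ)
    -- local domination hypothesis at `η`
    (U : Set (Fin m → ℝ)) (hU : U ∈ nhds η)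
    (g : X → ℝ) (hg : Integrable g μ)
    (hdom : ∀ η' ∈ U, ∀ᵐ x ∂μ,
      (1 + ∑ i, (s x i) ^ 2) * (1 + |η' ⬝ᵥ s x| + |f x|) * Real.exp (η' ⬝ᵥ s x) ≤ g x)
    -- the partial derivative of `uKL` with respect to the first coordinate vanishes at `η`
    (hcrit : HasDerivAt
      (fun t : ℝ =>
        (∫ x, Real.exp (Function.update η 0 t ⬝ᵥ s x) * (Function.update η 0 t ⬝ᵥ s x - f x) ∂μ)
          + (∫ x, Real.exp (f x) ∂μ) - ∫ x, Real.exp (Function.update η 0 t ⬝ᵥ s x) ∂μ)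
      0 (η 0)) :
    η 0 = (∫ x, Real.exp (η ⬝ᵥ s x) ∂μ)⁻¹ *
      ∫ x, (f x - ∑ i ∈ Finset.univ.erase 0, η i * s x i) * Real.exp (η ⬝ᵥ s x) ∂μ :=
  stmt1_general μ s hs hs1 f hf hπ0 η U hU g hg hdom hcrit
end

section
/- Write η = (η⁰, η̄) ∈ ℝ × ℝ^{m−1} and s = (1, s̄), and define the normalised Kullback–Leibler objective K(η̄) = ∫ q̄_{η̄} log(q̄_{η̄}/π̄) dμ, where q̄_{η̄} = e^{η̄⬝s̄} / ∫ e^{η̄⬝s̄} dμ and π̄ = e^f / ∫ e^f dμ. Fix η and assume the local domination hypothesis at η. Then: (i) if the gradient of η ↦ uKL(q_η ∣ π) vanishes at η, then the gradient of η̄' ↦ K(η̄') vanishes at η̄; and (ii) conversely, if the gradient of K vanishes at η̄ and the partial derivative of uKL(q_η ∣ π) with respect to η⁰ vanishes at η, then the full gradient of η ↦ uKL(q_η ∣ π) vanishes at η. -/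
/-!
Write `Z(η̄) = ∫ e^{η̄⬝s̄} dμ`, `W(η̄) = ∫ e^{η̄⬝s̄} (η̄⬝s̄ - f) dμ` and `Π = ∫ e^f dμ`.
Because `s₀ = 1`, the unnormalised objective factors as `uKL(η⁰, η̄) = e^{η⁰} (η⁰ Z + W - Z) + Π`,
while `K = W / Z - log Z + log Π`. In the sheared coordinate `u = η⁰ + log Z(η̄)` this reads
`uKL = e^u (u + K(η̄) - log Π - 1) + Π`, whose differential is `e^u ((u + K - log Π) du + dK)`.
Hence `∇ uKL = 0` iff both `∂_{η⁰} uKL = e^u (u + K - log Π)` and `∇ K` vanish, which gives both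
directions of the theorem. The local domination hypothesis makes `Z` and `W`, hence `K`,
differentiable, by differentiation under the integral sign.
-/

open MeasureTheory Matrix Real Filter Topology

noncomputable section

namespace ExpFamilyKL

lemma ae_forall_le_of_isOpen {X E : Type*} [MeasurableSpace X] {μ : Measure X}
    [TopologicalSpace E] [TopologicalSpace.SeparableSpace E] {V : Set E} (hV : IsOpen V)
    {φ : E → X → ℝ} {g : X → ℝ} (hφ : ∀ x, Continuous fun y => φ y x)
    (h : ∀ y ∈ V, ∀ᵐ x ∂μ, φ y x ≤ g x) :
    ∀ᵐ x ∂μ, ∀ y ∈ V, φ y x ≤ g x := by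
  obtain ⟨D, hD, hDense⟩ := TopologicalSpace.exists_countable_dense E
  have hVD : ∀ᵐ x ∂μ, ∀ y ∈ V ∩ D, φ y x ≤ g x :=
    (ae_ball_iff (hD.mono Set.inter_subset_right)).2 fun y hy => h y hy.1
  filter_upwards [hVD] with x hx y hy
  exact (isClosed_le (hφ x) continuous_const).closure_subset_iff.2 hx
    (hDense.open_subset_closure_inter hV hy)

section DotProduct

variable {ι : Type*} [Fintype ι]

def dotProductCLM (w : ι → ℝ) : (ι → ℝ) →L[ℝ] ℝ :=
  ∑ i, w i • ContinuousLinearMap.proj i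

@[simp] lemma dotProductCLM_apply (w v : ι → ℝ) : dotProductCLM w v = v ⬝ᵥ w := by
  simp [dotProductCLM, dotProduct, mul_comm]

lemma hasFDerivAt_dotProduct_const (w v : ι → ℝ) :
    HasFDerivAt (fun v => v ⬝ᵥ w) (dotProductCLM w) v := by
  convert (dotProductCLM w).hasFDerivAt using 1
  exact funext fun v => (dotProductCLM_apply w v).symm

lemma norm_le_one_add_sum_sq (w : ι → ℝ) : ‖w‖ ≤ 1 + ∑ i, w i ^ 2 := by
  refine (pi_norm_le_iff_of_nonneg (by positivity)).2 fun i => ?_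
  calc ‖w i‖ ≤ 1 + w i ^ 2 := by
        rw [Real.norm_eq_abs]; nlinarith [sq_abs (w i), sq_nonneg (|w i| - 1)]
    _ ≤ 1 + ∑ j, w j ^ 2 := by
        gcongr; exact Finset.single_le_sum (fun j _ => sq_nonneg (w j)) (Finset.mem_univ i)

lemma norm_dotProductCLM_le (w : ι → ℝ) :
    ‖dotProductCLM w‖ ≤ Fintype.card ι * (1 + ∑ i, w i ^ 2) := by
  refine ContinuousLinearMap.opNorm_le_bound _ (by positivity) fun v => ?_
  calc ‖dotProductCLM w v‖ ≤ ∑ i, ‖v i * w i‖ := by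
        rw [dotProductCLM_apply]; exact norm_sum_le _ _
    _ ≤ ∑ _i : ι, ‖v‖ * (1 + ∑ i, w i ^ 2) := by
        gcongr with i
        rw [norm_mul]
        gcongr
        · exact norm_le_pi_norm v i
        · exact (norm_le_pi_norm w i).trans (norm_le_one_add_sum_sq w)
    _ = Fintype.card ι * (1 + ∑ i, w i ^ 2) * ‖v‖ := by
        rw [Finset.sum_const, Finset.card_univ, nsmul_eq_mul]; ring

variable {X : Type*} [MeasurableSpace X] {s : X → ι → ℝ}

lemma measurable_dotProduct_const (hs : Measurable s) (v : ι → ℝ) :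
    Measurable fun x => v ⬝ᵥ s x :=
  (continuous_const.dotProduct continuous_id).measurable.comp hs

lemma stronglyMeasurable_dotProductCLM (hs : Measurable s) :
    StronglyMeasurable fun x => dotProductCLM (s x) :=
  Finset.stronglyMeasurable_fun_sum _ fun i _ =>
    ((measurable_pi_apply i).comp hs).stronglyMeasurable.smul_const _

end DotProduct

lemma finCons_dotProduct_finCons {n : ℕ} (a b : ℝ) (v w : Fin n → ℝ) :
    (Fin.cons a v : Fin (n + 1) → ℝ) ⬝ᵥ Fin.cons b w = a * b + v ⬝ᵥ w :=
  cons_dotProduct_cons a v b w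

lemma hasFDerivAt_zero_finCons_iff {n : ℕ} {F : (Fin (n + 1) → ℝ) → ℝ} {t : ℝ}
    {v : Fin n → ℝ} :
    HasFDerivAt F (0 : (Fin (n + 1) → ℝ) →L[ℝ] ℝ) (Fin.cons t v)
      ↔ HasFDerivAt (fun p : ℝ × (Fin n → ℝ) => F (Fin.cons p.1 p.2))
          (0 : ℝ × (Fin n → ℝ) →L[ℝ] ℝ) (t, v) := by
  have h := (Fin.consEquivL ℝ fun _ => ℝ).comp_right_hasFDerivAt_iff (f := F) (f' := 0)
    (x := (t, v))
  rw [ContinuousLinearMap.zero_comp] at h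
  exact h.symm

section ShearProfile

open ContinuousLinearMap

variable {E : Type*} {a k : E → ℝ} {t : ℝ} {v : E}

def shearProfile (a k : E → ℝ) (p : ℝ × E) : ℝ :=
  exp (p.1 + a p.2) * (p.1 + a p.2 + k p.2 - 1)

lemma hasDerivAt_shearProfile_fst_zero_iff :
    HasDerivAt (fun t => shearProfile a k (t, v)) 0 t ↔ t + a v + k v = 0 := by
  have hu := (hasDerivAt_id t).add_const (a v)
  have hd : HasDerivAt (fun t => shearProfile a k (t, v)) (exp (t + a v) * (t + a v + k v)) t := by
    refine (hu.exp.mul ((hu.add_const (k v)).sub_const 1)).congr_deriv ?_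
    simp only [id]
    ring
  constructor
  · intro h
    exact (mul_eq_zero.1 (hd.unique h)).resolve_left (exp_ne_zero _)
  · intro hu
    simpa [hu] using hd

variable [NormedAddCommGroup E] [NormedSpace ℝ E] {a' k' : E →L[ℝ] ℝ}

lemma hasFDerivAt_shearProfile (ha : HasFDerivAt a a' v) (hk : HasFDerivAt k k' v) (t : ℝ) :
    HasFDerivAt (shearProfile a k)
      (exp (t + a v) •
        ((t + a v + k v) • (fst ℝ ℝ E + a' ∘L snd ℝ ℝ E) + k' ∘L snd ℝ ℝ E)) (t, v) := by
  have hu : HasFDerivAt (fun p : ℝ × E => p.1 + a p.2)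
      (fst ℝ ℝ E + a' ∘L snd ℝ ℝ E) (t, v) :=
    hasFDerivAt_fst.add (ha.comp (t, v) hasFDerivAt_snd)
  refine (hu.exp.mul ((hu.add (hk.comp (t, v) hasFDerivAt_snd)).sub_const 1)).congr_fderiv ?_
  refine ContinuousLinearMap.ext fun p => ?_
  simp only [_root_.add_apply, _root_.smul_apply, coe_comp, Function.comp_apply, smul_eq_mul,
    Pi.add_apply]
  ring

lemma hasFDerivAt_shearProfile_zero_iff (ha : HasFDerivAt a a' v) (hk : HasFDerivAt k k' v) :
    HasFDerivAt (shearProfile a k) (0 : ℝ × E →L[ℝ] ℝ) (t, v)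
      ↔ t + a v + k v = 0 ∧ HasFDerivAt k (0 : E →L[ℝ] ℝ) v := by
  constructor
  · intro h
    have hD := (hasFDerivAt_shearProfile ha hk t).unique h
    have hu : t + a v + k v = 0 := by
      simpa [exp_ne_zero] using congrArg (fun L => L (1, 0)) hD
    refine ⟨hu, ?_⟩
    have hk' : k' = 0 := by
      ext w
      simpa [hu, exp_ne_zero] using congrArg (fun L => L (0, w)) hD
    rwa [hk'] at hk
  · rintro ⟨hu, hk0⟩
    simpa [hu] using hasFDerivAt_shearProfile ha hk0 t

end ShearProfile

variable {X : Type*} {ι : Type*} [Fintype ι]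

def dominationBound (s : X → ι → ℝ) (f : X → ℝ) (v : ι → ℝ) (x : X) : ℝ :=
  (1 + ∑ i, s x i ^ 2) * (1 + |v ⬝ᵥ s x| + |f x|) * exp (v ⬝ᵥ s x)

section Bounds

variable {s : X → ι → ℝ} {f : X → ℝ} {v : ι → ℝ} {x : X} {c : ℝ}

lemma continuous_dominationBound (s : X → ι → ℝ) (f : X → ℝ) (x : X) :
    Continuous fun v => dominationBound s f v x := by
  unfold dominationBound; fun_prop

lemma norm_le_dominationBound (hc : |c| ≤ 1 + |v ⬝ᵥ s x| + |f x|) :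
    ‖exp (v ⬝ᵥ s x) * c‖ ≤ dominationBound s f v x := by
  have hA : 1 ≤ 1 + ∑ i, s x i ^ 2 := le_add_of_nonneg_right (by positivity)
  rw [norm_mul, Real.norm_of_nonneg (exp_pos _).le, Real.norm_eq_abs, dominationBound]
  calc exp (v ⬝ᵥ s x) * |c| = 1 * |c| * exp (v ⬝ᵥ s x) := by ring
    _ ≤ _ := by gcongr

lemma norm_smul_dotProductCLM_le (hc : |c| ≤ 1 + |v ⬝ᵥ s x| + |f x|) :
    ‖(exp (v ⬝ᵥ s x) * c) • dotProductCLM (s x)‖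
      ≤ Fintype.card ι * dominationBound s f v x := by
  rw [norm_smul, Real.norm_eq_abs, abs_mul, abs_of_pos (exp_pos _), dominationBound]
  calc exp (v ⬝ᵥ s x) * |c| * ‖dotProductCLM (s x)‖
      ≤ exp (v ⬝ᵥ s x) * (1 + |v ⬝ᵥ s x| + |f x|)
        * (Fintype.card ι * (1 + ∑ i, s x i ^ 2)) := by
        gcongr; exact norm_dotProductCLM_le (s x)
    _ = _ := by ring

lemma dominationBound_le_finCons {n : ℕ} (sbar : X → Fin n → ℝ) (f : X → ℝ) (t : ℝ)
    (v : Fin n → ℝ) (x : X) :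
    dominationBound sbar f v x
      ≤ (1 + |t|) * exp (-t)
        * dominationBound (fun x => Fin.cons 1 (sbar x)) f (Fin.cons t v) x := by
  simp only [dominationBound, finCons_dotProduct_finCons, mul_one, Fin.sum_univ_succ,
    Fin.cons_zero, Fin.cons_succ, one_pow]
  have hB : 1 + |v ⬝ᵥ sbar x| + |f x| ≤ (1 + |t|) * (1 + |t + v ⬝ᵥ sbar x| + |f x|) := by
    have h : |v ⬝ᵥ sbar x| ≤ |t + v ⬝ᵥ sbar x| + |t| := by
      simpa using abs_sub (t + v ⬝ᵥ sbar x) t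
    nlinarith [mul_nonneg (abs_nonneg t)
      (add_nonneg (abs_nonneg (t + v ⬝ᵥ sbar x)) (abs_nonneg (f x)))]
  calc (1 + ∑ i, sbar x i ^ 2) * (1 + |v ⬝ᵥ sbar x| + |f x|) * exp (v ⬝ᵥ sbar x)
      ≤ (1 + (1 + ∑ i, sbar x i ^ 2)) * ((1 + |t|) * (1 + |t + v ⬝ᵥ sbar x| + |f x|))
        * exp (v ⬝ᵥ sbar x) := by gcongr; linarith
    _ = _ := by
        rw [show exp (v ⬝ᵥ sbar x) = exp (-t) * exp (t + v ⬝ᵥ sbar x) by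
          rw [← exp_add]; ring_nf]
        ring

end Bounds

variable [MeasurableSpace X]

variable (μ : Measure X) in
def LocallyDominated (s : X → ι → ℝ) (f : X → ℝ) (v₀ : ι → ℝ) : Prop :=
  ∃ U ∈ 𝓝 v₀, ∃ g : X → ℝ, Integrable g μ ∧
    ∀ v ∈ U, ∀ᵐ x ∂μ, dominationBound s f v x ≤ g x

variable (μ : Measure X) in
def partitionFn (s : X → ι → ℝ) (v : ι → ℝ) : ℝ := ∫ x, exp (v ⬝ᵥ s x) ∂μ

variable (μ : Measure X) in
/-- `∫ q log (q / π) dμ` for `q = exp (v ⬝ᵥ s)` and `π = exp f`. -/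
def klIntegral (s : X → ι → ℝ) (f : X → ℝ) (v : ι → ℝ) : ℝ :=
  ∫ x, exp (v ⬝ᵥ s x) * (v ⬝ᵥ s x - f x) ∂μ

variable (μ : Measure X) in
def unnormalizedKL (s : X → ι → ℝ) (f : X → ℝ) (η : ι → ℝ) : ℝ :=
  klIntegral μ s f η + (∫ x, exp (f x) ∂μ) - partitionFn μ s η

variable (μ : Measure X) in
def normalizedKL (s : X → ι → ℝ) (f : X → ℝ) (v : ι → ℝ) : ℝ :=
  ∫ x, (exp (v ⬝ᵥ s x) / partitionFn μ s v)
    * log ((exp (v ⬝ᵥ s x) / partitionFn μ s v) / (exp (f x) / ∫ y, exp (f y) ∂μ)) ∂μ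

section Integrals

variable {μ : Measure X} {s : X → ι → ℝ} {f g : X → ℝ}

lemma integrable_exp_dotProduct_mul {v : ι → ℝ} {c : X → ℝ}
    (hmeas : AEStronglyMeasurable (fun x => exp (v ⬝ᵥ s x) * c x) μ)
    (hc : ∀ x, |c x| ≤ 1 + |v ⬝ᵥ s x| + |f x|)
    (hdom : ∀ᵐ x ∂μ, dominationBound s f v x ≤ g x) (hg : Integrable g μ) :
    Integrable (fun x => exp (v ⬝ᵥ s x) * c x) μ :=
  hg.mono' hmeas (hdom.mono fun x hx => (norm_le_dominationBound (hc x)).trans hx)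

lemma differentiableAt_integral_exp_dotProduct_mul {S : Set (ι → ℝ)} {v₀ : ι → ℝ}
    {c c' : (ι → ℝ) → X → ℝ} (hs : Measurable s)
    (hmeas : ∀ v, AEStronglyMeasurable (fun x => exp (v ⬝ᵥ s x) * c v x) μ)
    (hmeas' : Measurable (c' v₀))
    (hc : ∀ v x, |c v x| ≤ 1 + |v ⬝ᵥ s x| + |f x|)
    (hc' : ∀ v x, |c' v x| ≤ 1 + |v ⬝ᵥ s x| + |f x|)
    (hderiv : ∀ v x, HasFDerivAt (fun v => exp (v ⬝ᵥ s x) * c v x)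
      ((exp (v ⬝ᵥ s x) * c' v x) • dotProductCLM (s x)) v)
    (hS : S ∈ 𝓝 v₀) (hdom : ∀ᵐ x ∂μ, ∀ v ∈ S, dominationBound s f v x ≤ g x)
    (hg : Integrable g μ) :
    DifferentiableAt ℝ (fun v => ∫ x, exp (v ⬝ᵥ s x) * c v x ∂μ) v₀ := by
  have hmeasF' : StronglyMeasurable
      fun x => (exp (v₀ ⬝ᵥ s x) * c' v₀ x) • dotProductCLM (s x) :=
    .smul (((measurable_dotProduct_const hs v₀).exp.mul hmeas').stronglyMeasurable)
      (stronglyMeasurable_dotProductCLM hs)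
  refine (hasFDerivAt_integral_of_dominated_of_fderiv_le hS (.of_forall hmeas)
    (integrable_exp_dotProduct_mul (hmeas v₀) (hc v₀)
      (hdom.mono fun x hx => hx v₀ (mem_of_mem_nhds hS)) hg)
    hmeasF'.aestronglyMeasurable
    (hdom.mono fun x hx v hv => (norm_smul_dotProductCLM_le (hc' v x)).trans
      (mul_le_mul_of_nonneg_left (hx v hv) (by positivity)))
    (hg.const_mul _) (.of_forall fun x v _ => hderiv v x)).differentiableAt

lemma normalizedKL_eq [NeZero μ] {v : ι → ℝ}
    (hZ : Integrable (fun x => exp (v ⬝ᵥ s x)) μ)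
    (hW : Integrable (fun x => exp (v ⬝ᵥ s x) * (v ⬝ᵥ s x - f x)) μ)
    (hπ : 0 < ∫ x, exp (f x) ∂μ) :
    normalizedKL μ s f v = klIntegral μ s f v / partitionFn μ s v
      - log (partitionFn μ s v) + log (∫ x, exp (f x) ∂μ) := by
  unfold normalizedKL
  set Z := partitionFn μ s v
  set P := ∫ x, exp (f x) ∂μ
  have hZ0 : 0 < Z := integral_exp_pos hZ
  have hpt : ∀ x, exp (v ⬝ᵥ s x) / Z * log (exp (v ⬝ᵥ s x) / Z / (exp (f x) / P))
      = Z⁻¹ * (exp (v ⬝ᵥ s x) * (v ⬝ᵥ s x - f x))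
        + Z⁻¹ * (log P - log Z) * exp (v ⬝ᵥ s x) := by
    intro x
    rw [log_div (by positivity) (by positivity), log_div (exp_ne_zero _) hZ0.ne',
      log_div (exp_ne_zero _) hπ.ne', log_exp, log_exp]
    field_simp
    ring
  simp_rw [hpt]
  rw [integral_add (hW.const_mul _) (hZ.const_mul _), integral_const_mul, integral_const_mul]
  change Z⁻¹ * klIntegral μ s f v + Z⁻¹ * (log P - log Z) * Z = _
  field_simp
  ring

variable {n : ℕ} {sbar : X → Fin n → ℝ}

lemma unnormalizedKL_finCons {v : Fin n → ℝ}
    (hZ : Integrable (fun x => exp (v ⬝ᵥ sbar x)) μ)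
    (hW : Integrable (fun x => exp (v ⬝ᵥ sbar x) * (v ⬝ᵥ sbar x - f x)) μ) (t : ℝ) :
    unnormalizedKL μ (fun x => Fin.cons 1 (sbar x)) f (Fin.cons t v)
      = exp t * (t * partitionFn μ sbar v + klIntegral μ sbar f v - partitionFn μ sbar v)
        + ∫ x, exp (f x) ∂μ := by
  have hpt : ∀ x, exp (t + v ⬝ᵥ sbar x) * (t + v ⬝ᵥ sbar x - f x)
      = exp t * (t * exp (v ⬝ᵥ sbar x) + exp (v ⬝ᵥ sbar x) * (v ⬝ᵥ sbar x - f x)) := by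
    intro x; rw [exp_add]; ring
  simp only [unnormalizedKL, klIntegral, partitionFn, finCons_dotProduct_finCons, mul_one, hpt]
  simp only [exp_add]
  rw [integral_const_mul, integral_add (hZ.const_mul t) hW, integral_const_mul,
    integral_const_mul]
  ring

lemma unnormalizedKL_finCons_eq_shearProfile [NeZero μ] {v : Fin n → ℝ}
    (hZ : Integrable (fun x => exp (v ⬝ᵥ sbar x)) μ)
    (hW : Integrable (fun x => exp (v ⬝ᵥ sbar x) * (v ⬝ᵥ sbar x - f x)) μ)
    (hπ : 0 < ∫ x, exp (f x) ∂μ) (t : ℝ) :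
    unnormalizedKL μ (fun x => Fin.cons 1 (sbar x)) f (Fin.cons t v)
      = shearProfile (fun v => log (partitionFn μ sbar v))
          (fun v => normalizedKL μ sbar f v - log (∫ x, exp (f x) ∂μ)) (t, v)
        + ∫ x, exp (f x) ∂μ := by
  have hZ0 : 0 < partitionFn μ sbar v := integral_exp_pos hZ
  rw [unnormalizedKL_finCons hZ hW, shearProfile, normalizedKL_eq hZ hW hπ, exp_add,
    exp_log hZ0]
  field_simp
  ring

end Integrals

namespace LocallyDominated

variable {μ : Measure X} {s : X → ι → ℝ} {f : X → ℝ} {v₀ : ι → ℝ}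

lemma exists_ae_forall (h : LocallyDominated μ s f v₀) :
    ∃ S ∈ 𝓝 v₀, ∃ g : X → ℝ, Integrable g μ ∧
      ∀ᵐ x ∂μ, ∀ v ∈ S, dominationBound s f v x ≤ g x := by
  obtain ⟨U, hU, g, hg, hdom⟩ := h
  exact ⟨interior U, interior_mem_nhds.2 hU, g, hg, ae_forall_le_of_isOpen isOpen_interior
    (continuous_dominationBound s f) fun v hv => hdom v (interior_subset hv)⟩

lemma of_finCons {n : ℕ} {sbar : X → Fin n → ℝ} {t : ℝ} {v₀ : Fin n → ℝ}
    (h : LocallyDominated μ (fun x => Fin.cons 1 (sbar x)) f (Fin.cons t v₀)) :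
    LocallyDominated μ sbar f v₀ := by
  obtain ⟨U, hU, g, hg, hdom⟩ := h
  refine ⟨(fun v => (Fin.cons t v : Fin (n + 1) → ℝ)) ⁻¹' U,
    (continuous_const.finCons continuous_id).continuousAt.preimage_mem_nhds hU,
    fun x => (1 + |t|) * exp (-t) * g x, hg.const_mul _, fun v hv => ?_⟩
  filter_upwards [hdom _ hv] with x hx
  exact (dominationBound_le_finCons sbar f t v x).trans (by gcongr)

lemma eventually_integrable_exp (h : LocallyDominated μ s f v₀) (hs : Measurable s) :
    ∀ᶠ v in 𝓝 v₀, Integrable (fun x => exp (v ⬝ᵥ s x)) μ := by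
  obtain ⟨U, hU, g, hg, hdom⟩ := h
  filter_upwards [hU] with v hv
  simpa using integrable_exp_dotProduct_mul (c := fun _ => 1)
    (by simpa using ((measurable_dotProduct_const hs v).exp).aestronglyMeasurable)
    (fun x => by rw [abs_one]; linarith [abs_nonneg (v ⬝ᵥ s x), abs_nonneg (f x)])
    (hdom v hv) hg

lemma eventually_integrable_exp_mul_sub (h : LocallyDominated μ s f v₀) (hs : Measurable s)
    (hf : Measurable f) :
    ∀ᶠ v in 𝓝 v₀, Integrable (fun x => exp (v ⬝ᵥ s x) * (v ⬝ᵥ s x - f x)) μ := by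
  obtain ⟨U, hU, g, hg, hdom⟩ := h
  filter_upwards [hU] with v hv
  exact integrable_exp_dotProduct_mul
    ((measurable_dotProduct_const hs v).exp.mul
      ((measurable_dotProduct_const hs v).sub hf)).aestronglyMeasurable
    (fun x => by linarith [abs_sub (v ⬝ᵥ s x) (f x)]) (hdom v hv) hg

lemma differentiableAt_partitionFn (h : LocallyDominated μ s f v₀) (hs : Measurable s) :
    DifferentiableAt ℝ (partitionFn μ s) v₀ := by
  obtain ⟨S, hS, g, hg, hdom⟩ := h.exists_ae_forall
  have hone : ∀ (v : ι → ℝ) x, |(1 : ℝ)| ≤ 1 + |v ⬝ᵥ s x| + |f x| := fun v x => by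
    rw [abs_one]; linarith [abs_nonneg (v ⬝ᵥ s x), abs_nonneg (f x)]
  unfold partitionFn
  simpa using differentiableAt_integral_exp_dotProduct_mul
    (c := fun _ _ => 1) (c' := fun _ _ => 1) hs
    (fun v => by simpa using ((measurable_dotProduct_const hs v).exp).aestronglyMeasurable)
    measurable_const hone hone
    (fun v x => by simpa using (hasFDerivAt_dotProduct_const (s x) v).exp) hS hdom hg

lemma differentiableAt_klIntegral (h : LocallyDominated μ s f v₀) (hs : Measurable s)
    (hf : Measurable f) :
    DifferentiableAt ℝ (klIntegral μ s f) v₀ := by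
  obtain ⟨S, hS, g, hg, hdom⟩ := h.exists_ae_forall
  refine differentiableAt_integral_exp_dotProduct_mul (f := f)
    (c := fun v x => v ⬝ᵥ s x - f x) (c' := fun v x => v ⬝ᵥ s x - f x + 1) hs
    (fun v => ((measurable_dotProduct_const hs v).exp.mul
      ((measurable_dotProduct_const hs v).sub hf)).aestronglyMeasurable)
    (((measurable_dotProduct_const hs v₀).sub hf).add_const 1)
    (fun v x => by linarith [abs_sub (v ⬝ᵥ s x) (f x)])
    (fun v x => by linarith [abs_add_le (v ⬝ᵥ s x - f x) 1, abs_sub (v ⬝ᵥ s x) (f x),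
      (abs_one : |(1 : ℝ)| = 1)])
    (fun v x => ?_) hS hdom hg
  have hd := hasFDerivAt_dotProduct_const (s x) v
  refine (hd.exp.mul (hd.sub_const (f x))).congr_fderiv ?_
  ext w
  simp only [_root_.add_apply, _root_.smul_apply, smul_eq_mul]
  ring

variable [NeZero μ]

lemma partitionFn_pos (h : LocallyDominated μ s f v₀) (hs : Measurable s) :
    0 < partitionFn μ s v₀ :=
  integral_exp_pos (h.eventually_integrable_exp hs).self_of_nhds

lemma differentiableAt_normalizedKL (h : LocallyDominated μ s f v₀) (hs : Measurable s)
    (hf : Measurable f) (hπ : 0 < ∫ x, exp (f x) ∂μ) :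
    DifferentiableAt ℝ (normalizedKL μ s f) v₀ := by
  have hZ := h.differentiableAt_partitionFn hs
  have hZ0 := (h.partitionFn_pos hs).ne'
  refine ((((h.differentiableAt_klIntegral hs hf).mul (hZ.inv hZ0)).sub (hZ.log hZ0)).add_const
    (log (∫ x, exp (f x) ∂μ))).congr_of_eventuallyEq ?_
  filter_upwards [h.eventually_integrable_exp hs, h.eventually_integrable_exp_mul_sub hs hf]
    with v hZv hWv
  rw [normalizedKL_eq hZv hWv hπ, div_eq_mul_inv]
  rfl

variable {n : ℕ} {sbar : X → Fin n → ℝ} {v₀ : Fin n → ℝ}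

lemma unnormalizedKL_finCons_eventuallyEq (h : LocallyDominated μ sbar f v₀)
    (hs : Measurable sbar) (hf : Measurable f) (hπ : 0 < ∫ x, exp (f x) ∂μ) (t : ℝ) :
    (fun p : ℝ × (Fin n → ℝ) =>
        unnormalizedKL μ (fun x => Fin.cons 1 (sbar x)) f (Fin.cons p.1 p.2))
      =ᶠ[𝓝 (t, v₀)] fun p => shearProfile (fun v => log (partitionFn μ sbar v))
          (fun v => normalizedKL μ sbar f v - log (∫ x, exp (f x) ∂μ)) p
        + ∫ x, exp (f x) ∂μ := by
  filter_upwards [(continuous_snd.tendsto (t, v₀)).eventually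
    ((h.eventually_integrable_exp hs).and (h.eventually_integrable_exp_mul_sub hs hf))]
    with p hp
  exact unnormalizedKL_finCons_eq_shearProfile hp.1 hp.2 hπ p.1

lemma hasFDerivAt_unnormalizedKL_finCons_zero_iff (h : LocallyDominated μ sbar f v₀)
    (hs : Measurable sbar) (hf : Measurable f) (hπ : 0 < ∫ x, exp (f x) ∂μ) (t : ℝ) :
    HasFDerivAt (unnormalizedKL μ (fun x => Fin.cons 1 (sbar x)) f)
        (0 : (Fin (n + 1) → ℝ) →L[ℝ] ℝ) (Fin.cons t v₀)
      ↔ t + log (partitionFn μ sbar v₀)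
            + (normalizedKL μ sbar f v₀ - log (∫ x, exp (f x) ∂μ)) = 0
        ∧ HasFDerivAt (normalizedKL μ sbar f) (0 : (Fin n → ℝ) →L[ℝ] ℝ) v₀ := by
  rw [hasFDerivAt_zero_finCons_iff,
    (h.unnormalizedKL_finCons_eventuallyEq hs hf hπ t).hasFDerivAt_iff,
    hasFDerivAt_add_const_iff, hasFDerivAt_shearProfile_zero_iff
      ((h.differentiableAt_partitionFn hs).log (h.partitionFn_pos hs).ne').hasFDerivAt
      ((h.differentiableAt_normalizedKL hs hf hπ).sub_const _).hasFDerivAt,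
    hasFDerivAt_sub_const_iff]

lemma hasDerivAt_unnormalizedKL_finCons_zero_iff (h : LocallyDominated μ sbar f v₀)
    (hs : Measurable sbar) (hf : Measurable f) (hπ : 0 < ∫ x, exp (f x) ∂μ) (t : ℝ) :
    HasDerivAt (fun τ => unnormalizedKL μ (fun x => Fin.cons 1 (sbar x)) f (Fin.cons τ v₀)) 0 t
      ↔ t + log (partitionFn μ sbar v₀)
          + (normalizedKL μ sbar f v₀ - log (∫ x, exp (f x) ∂μ)) = 0 :=
  ((h.unnormalizedKL_finCons_eventuallyEq hs hf hπ t).comp_tendsto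
    ((continuous_id.prodMk continuous_const).tendsto t)).hasDerivAt_iff.trans
    ((hasDerivAt_add_const_iff _).trans hasDerivAt_shearProfile_fst_zero_iff)

end LocallyDominated

end ExpFamilyKL

open ExpFamilyKL in
theorem stmt2_general
    {X : Type*} [MeasurableSpace X] (μ : Measure X)
    {m : ℕ} (sbar : X → Fin m → ℝ) (hsbar : Measurable sbar)
    (f : X → ℝ) (hf : Measurable f)
    (hπ0 : 0 < ∫ x, Real.exp (f x) ∂μ)
    (η0 : ℝ) (ηbar : Fin m → ℝ)
    -- local domination hypothesis at `η = (η0, ηbar)`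
    (U : Set (Fin (m + 1) → ℝ)) (hU : U ∈ nhds (Fin.cons η0 ηbar))
    (g : X → ℝ) (hg : Integrable g μ)
    (hdom : ∀ η' ∈ U, ∀ᵐ x ∂μ,
      (1 + ∑ i, ((Fin.cons 1 (sbar x) : Fin (m + 1) → ℝ) i) ^ 2)
          * (1 + |η' ⬝ᵥ (Fin.cons 1 (sbar x) : Fin (m + 1) → ℝ)| + |f x|)
          * Real.exp (η' ⬝ᵥ (Fin.cons 1 (sbar x) : Fin (m + 1) → ℝ)) ≤ g x) :
    -- (i) critical point of uKL gives critical point of K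
    (HasFDerivAt
        (fun η' : Fin (m + 1) → ℝ =>
          (∫ x, Real.exp (η' ⬝ᵥ (Fin.cons 1 (sbar x) : Fin (m + 1) → ℝ))
              * (η' ⬝ᵥ (Fin.cons 1 (sbar x) : Fin (m + 1) → ℝ) - f x) ∂μ)
            + (∫ x, Real.exp (f x) ∂μ)
            - ∫ x, Real.exp (η' ⬝ᵥ (Fin.cons 1 (sbar x) : Fin (m + 1) → ℝ)) ∂μ)
        (0 : (Fin (m + 1) → ℝ) →L[ℝ] ℝ) (Fin.cons η0 ηbar) →
      HasFDerivAt
        (fun ηb : Fin m → ℝ =>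
          ∫ x, (Real.exp (ηb ⬝ᵥ sbar x) / ∫ y, Real.exp (ηb ⬝ᵥ sbar y) ∂μ)
            * Real.log ((Real.exp (ηb ⬝ᵥ sbar x) / ∫ y, Real.exp (ηb ⬝ᵥ sbar y) ∂μ)
                / (Real.exp (f x) / ∫ y, Real.exp (f y) ∂μ)) ∂μ)
        (0 : (Fin m → ℝ) →L[ℝ] ℝ) ηbar)
    ∧
    -- (ii) critical point of K together with vanishing ∂_{η⁰} uKL gives critical point of uKL
    (HasFDerivAt
        (fun ηb : Fin m → ℝ =>
          ∫ x, (Real.exp (ηb ⬝ᵥ sbar x) / ∫ y, Real.exp (ηb ⬝ᵥ sbar y) ∂μ)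
            * Real.log ((Real.exp (ηb ⬝ᵥ sbar x) / ∫ y, Real.exp (ηb ⬝ᵥ sbar y) ∂μ)
                / (Real.exp (f x) / ∫ y, Real.exp (f y) ∂μ)) ∂μ)
        (0 : (Fin m → ℝ) →L[ℝ] ℝ) ηbar →
      HasDerivAt
        (fun t : ℝ =>
          (∫ x, Real.exp ((Fin.cons t ηbar : Fin (m + 1) → ℝ) ⬝ᵥ (Fin.cons 1 (sbar x) : Fin (m + 1) → ℝ))
              * ((Fin.cons t ηbar : Fin (m + 1) → ℝ) ⬝ᵥ (Fin.cons 1 (sbar x) : Fin (m + 1) → ℝ) - f x) ∂μ)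
            + (∫ x, Real.exp (f x) ∂μ)
            - ∫ x, Real.exp ((Fin.cons t ηbar : Fin (m + 1) → ℝ) ⬝ᵥ (Fin.cons 1 (sbar x) : Fin (m + 1) → ℝ)) ∂μ)
        0 η0 →
      HasFDerivAt
        (fun η' : Fin (m + 1) → ℝ =>
          (∫ x, Real.exp (η' ⬝ᵥ (Fin.cons 1 (sbar x) : Fin (m + 1) → ℝ))
              * (η' ⬝ᵥ (Fin.cons 1 (sbar x) : Fin (m + 1) → ℝ) - f x) ∂μ)
            + (∫ x, Real.exp (f x) ∂μ)
            - ∫ x, Real.exp (η' ⬝ᵥ (Fin.cons 1 (sbar x) : Fin (m + 1) → ℝ)) ∂μ)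
        (0 : (Fin (m + 1) → ℝ) →L[ℝ] ℝ) (Fin.cons η0 ηbar)) := by
  have : NeZero μ := ⟨by rintro rfl; simp at hπ0⟩
  have hloc : LocallyDominated μ sbar f ηbar :=
    LocallyDominated.of_finCons ⟨U, hU, g, hg, hdom⟩
  have hcrit := hloc.hasFDerivAt_unnormalizedKL_finCons_zero_iff hsbar hf hπ0 η0
  have hpartial := hloc.hasDerivAt_unnormalizedKL_finCons_zero_iff hsbar hf hπ0 η0
  exact ⟨fun h => (hcrit.1 h).2, fun hK ht => hcrit.2 ⟨hpartial.1 ht, hK⟩⟩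

/-- Write `η = (η⁰, η̄) ∈ ℝ × ℝ^m` and `s = (1, s̄)`, and let
`K(η̄) = ∫ q̄_{η̄} log(q̄_{η̄}/π̄) dμ` be the normalised KL objective, where
`q̄_{η̄} = e^{η̄⬝s̄}/∫ e^{η̄⬝s̄} dμ` and `π̄ = e^f/∫ e^f dμ`. Under the local domination
hypothesis at `η`: (i) if the gradient of `uKL` vanishes at `η` then the gradient of `K`
vanishes at `η̄`; (ii) conversely, if the gradient of `K` vanishes at `η̄` and the partial
derivative of `uKL` in `η⁰` vanishes at `η`, then the full gradient of `uKL` vanishes at `η`. -/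
theorem stmt2
    {X : Type*} [MeasurableSpace X] (μ : Measure X) [SigmaFinite μ]
    {m : ℕ} (sbar : X → Fin m → ℝ) (hsbar : Measurable sbar)
    (f : X → ℝ) (hf : Measurable f)
    (hπ0 : 0 < ∫ x, Real.exp (f x) ∂μ)
    (hπ1 : Integrable (fun x => Real.exp (f x)) μ)
    (η0 : ℝ) (ηbar : Fin m → ℝ)
    -- local domination hypothesis at `η = (η0, ηbar)`
    (U : Set (Fin (m + 1) → ℝ)) (hU : U ∈ nhds (Fin.cons η0 ηbar))
    (g : X → ℝ) (hg : Integrable g μ)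
    (hdom : ∀ η' ∈ U, ∀ᵐ x ∂μ,
      (1 + ∑ i, ((Fin.cons 1 (sbar x) : Fin (m + 1) → ℝ) i) ^ 2)
          * (1 + |η' ⬝ᵥ (Fin.cons 1 (sbar x) : Fin (m + 1) → ℝ)| + |f x|)
          * Real.exp (η' ⬝ᵥ (Fin.cons 1 (sbar x) : Fin (m + 1) → ℝ)) ≤ g x) :
    -- (i) critical point of uKL gives critical point of K
    (HasFDerivAt
        (fun η' : Fin (m + 1) → ℝ =>
          (∫ x, Real.exp (η' ⬝ᵥ (Fin.cons 1 (sbar x) : Fin (m + 1) → ℝ))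
              * (η' ⬝ᵥ (Fin.cons 1 (sbar x) : Fin (m + 1) → ℝ) - f x) ∂μ)
            + (∫ x, Real.exp (f x) ∂μ)
            - ∫ x, Real.exp (η' ⬝ᵥ (Fin.cons 1 (sbar x) : Fin (m + 1) → ℝ)) ∂μ)
        (0 : (Fin (m + 1) → ℝ) →L[ℝ] ℝ) (Fin.cons η0 ηbar) →
      HasFDerivAt
        (fun ηb : Fin m → ℝ =>
          ∫ x, (Real.exp (ηb ⬝ᵥ sbar x) / ∫ y, Real.exp (ηb ⬝ᵥ sbar y) ∂μ)
            * Real.log ((Real.exp (ηb ⬝ᵥ sbar x) / ∫ y, Real.exp (ηb ⬝ᵥ sbar y) ∂μ)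
                / (Real.exp (f x) / ∫ y, Real.exp (f y) ∂μ)) ∂μ)
        (0 : (Fin m → ℝ) →L[ℝ] ℝ) ηbar)
    ∧
    -- (ii) critical point of K together with vanishing ∂_{η⁰} uKL gives critical point of uKL
    (HasFDerivAt
        (fun ηb : Fin m → ℝ =>
          ∫ x, (Real.exp (ηb ⬝ᵥ sbar x) / ∫ y, Real.exp (ηb ⬝ᵥ sbar y) ∂μ)
            * Real.log ((Real.exp (ηb ⬝ᵥ sbar x) / ∫ y, Real.exp (ηb ⬝ᵥ sbar y) ∂μ)
                / (Real.exp (f x) / ∫ y, Real.exp (f y) ∂μ)) ∂μ)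
        (0 : (Fin m → ℝ) →L[ℝ] ℝ) ηbar →
      HasDerivAt
        (fun t : ℝ =>
          (∫ x, Real.exp ((Fin.cons t ηbar : Fin (m + 1) → ℝ) ⬝ᵥ (Fin.cons 1 (sbar x) : Fin (m + 1) → ℝ))
              * ((Fin.cons t ηbar : Fin (m + 1) → ℝ) ⬝ᵥ (Fin.cons 1 (sbar x) : Fin (m + 1) → ℝ) - f x) ∂μ)
            + (∫ x, Real.exp (f x) ∂μ)
            - ∫ x, Real.exp ((Fin.cons t ηbar : Fin (m + 1) → ℝ) ⬝ᵥ (Fin.cons 1 (sbar x) : Fin (m + 1) → ℝ)) ∂μ)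
        0 η0 →
      HasFDerivAt
        (fun η' : Fin (m + 1) → ℝ =>
          (∫ x, Real.exp (η' ⬝ᵥ (Fin.cons 1 (sbar x) : Fin (m + 1) → ℝ))
              * (η' ⬝ᵥ (Fin.cons 1 (sbar x) : Fin (m + 1) → ℝ) - f x) ∂μ)
            + (∫ x, Real.exp (f x) ∂μ)
            - ∫ x, Real.exp (η' ⬝ᵥ (Fin.cons 1 (sbar x) : Fin (m + 1) → ℝ)) ∂μ)
        (0 : (Fin (m + 1) → ℝ) →L[ℝ] ℝ) (Fin.cons η0 ηbar)) :=
  stmt2_general μ sbar hsbar f hf hπ0 η0 ηbar U hU g hg hdom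
end
end

section
/- Let μ, σ ∈ ℝ^d with σ_j > 0 for all j, let Z be distributed according to the standard Gaussian measure γ_d on ℝ^d, and set X = μ + σ ⊙ Z. Let f : ℝ^d → ℝ be measurable with E[f(X)²] < ∞. Define γ⁰ = E[f(X)], γ¹_j = E[Z_j f(X)], γ²_j = E[(Z_j² − 1) f(X)] / √2, and then β²_j = γ²_j / (√2 σ_j²), β¹_j = γ¹_j / σ_j − 2 β²_j μ_j, β⁰ = γ⁰ − β¹ ⬝ μ − Σ_j β²_j (μ_j² + σ_j²). Then β = (β⁰, β¹, β²) ∈ ℝ^{2d+1} is the unique minimiser over β' = (β'⁰, β'¹, β'²) ∈ ℝ^{2d+1} of the least-squares objective E[(β'⁰ + β'¹ ⬝ X + Σ_j β'²_j X_j² − f(X))²]. -/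
/-!
With `X = μ + σ ⊙ Z`, the model `b⁰ + b¹ ⬝ X + ∑ b²_j X_j²` is, after a triangular change of
coefficients that is invertible because `σ_j ≠ 0`, an arbitrary linear combination of the features
`1, Z_j, Z_j² - 1`. These are orthogonal in `L²(γ_d)` with squared norms `1, 1, 2`: the coordinates
are independent, and `He₁ = X`, `He₂ = X² - 1` are centred and orthogonal for `N(0,1)` with
`E He_n² = n!`, by the moment recursion `E Z^(n+2) = (n+1) E Z^n` (Gaussian integration by parts).
By Pythagoras the objective is its value at the orthogonal projection of `f(X)` plus a positive
definite quadratic form in the coefficient error, and the projection's coefficients are `γ⁰, γ¹_j`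
and `γ²_j / √2`, which is `β` in the new coordinates.
-/

open MeasureTheory Matrix

noncomputable section

/-- The standard Gaussian measure on `ℝ^d` (product of `d` copies of `N(0,1)`). -/
def stdGaussian (d : ℕ) : Measure (Fin d → ℝ) :=
  Measure.pi fun _ => ProbabilityTheory.gaussianReal 0 1

open ProbabilityTheory Real

lemma hasDerivAt_gaussianPDFReal_zero_one (x : ℝ) :
    HasDerivAt (gaussianPDFReal 0 1) (-x * gaussianPDFReal 0 1 x) x := by
  have hpdf : gaussianPDFReal 0 1 = fun x => (√(2 * π))⁻¹ * rexp (-x ^ 2 / 2) := by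
    ext; simp [gaussianPDFReal]
  rw [hpdf]
  refine (((hasDerivAt_pow 2 x).fun_neg.div_const 2).exp.const_mul (√(2 * π))⁻¹).congr_deriv ?_
  push_cast
  ring

lemma integrable_pow_gaussianReal (n : ℕ) : Integrable (fun x : ℝ => x ^ n) (gaussianReal 0 1) :=
  (memLp_id_gaussianReal (μ := 0) (v := 1) n).integrable_norm_pow'.mono' (by fun_prop)
    (.of_forall fun x => by simp)

lemma integrable_pow_mul_gaussianPDFReal (n : ℕ) :
    Integrable fun x : ℝ => x ^ n * gaussianPDFReal 0 1 x := by
  have h := integrable_pow_gaussianReal n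
  rw [gaussianReal_of_var_ne_zero 0 one_ne_zero, gaussianPDF_def,
    integrable_withDensity_iff_integrable_smul' (by fun_prop) (by simp)] at h
  refine h.congr (.of_forall fun x => ?_)
  simp [ENNReal.toReal_ofReal (gaussianPDFReal_nonneg 0 1 x), mul_comm]

lemma integral_pow_add_two_gaussianReal (n : ℕ) :
    ∫ x, x ^ (n + 2) ∂gaussianReal 0 1 = (n + 1) * ∫ x, x ^ n ∂gaussianReal 0 1 := by
  simp only [integral_gaussianReal_eq_integral_smul one_ne_zero, smul_eq_mul]
  have hderiv (x : ℝ) : HasDerivAt (fun x => x ^ (n + 1) * gaussianPDFReal 0 1 x)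
      ((n + 1) * (x ^ n * gaussianPDFReal 0 1 x) - x ^ (n + 2) * gaussianPDFReal 0 1 x) x := by
    refine ((hasDerivAt_pow (n + 1) x).fun_mul
      (hasDerivAt_gaussianPDFReal_zero_one x)).congr_deriv ?_
    push_cast
    ring
  have hint := integral_eq_zero_of_hasDerivAt_of_integrable hderiv
    (((integrable_pow_mul_gaussianPDFReal n).const_mul _).sub
      (integrable_pow_mul_gaussianPDFReal (n + 2)))
    (integrable_pow_mul_gaussianPDFReal (n + 1))
  rw [integral_sub ((integrable_pow_mul_gaussianPDFReal n).const_mul _)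
    (integrable_pow_mul_gaussianPDFReal (n + 2)), integral_const_mul, sub_eq_zero] at hint
  simp_rw [mul_comm (gaussianPDFReal 0 1 _)]
  exact hint.symm

lemma integral_pow_two_gaussianReal : ∫ x, x ^ 2 ∂gaussianReal 0 1 = 1 := by
  simpa using integral_pow_add_two_gaussianReal 0

lemma integral_pow_three_gaussianReal : ∫ x, x ^ 3 ∂gaussianReal 0 1 = 0 := by
  simpa using integral_pow_add_two_gaussianReal 1

lemma integral_pow_four_gaussianReal : ∫ x, x ^ 4 ∂gaussianReal 0 1 = 3 := by
  rw [integral_pow_add_two_gaussianReal 2, integral_pow_two_gaussianReal]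
  norm_num

/-- The probabilists' Hermite polynomials `He₁ = X` and `He₂ = X² - 1`. -/
def hermiteFn : Fin 2 → ℝ → ℝ
  | 0, x => x
  | 1, x => x ^ 2 - 1

def hermiteSqNorm (k : Fin 2) : ℝ := (k + 1 : ℕ).factorial

lemma hermiteSqNorm_pos (k : Fin 2) : 0 < hermiteSqNorm k :=
  Nat.cast_pos.2 (Nat.factorial_pos _)

lemma measurable_hermiteFn : ∀ k, Measurable (hermiteFn k)
  | 0 => measurable_id
  | 1 => (measurable_id.pow_const 2).sub_const 1

lemma memLp_hermiteFn (k : Fin 2) : MemLp (hermiteFn k) 2 (gaussianReal 0 1) := by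
  refine (memLp_two_iff_integrable_sq (measurable_hermiteFn k).aestronglyMeasurable).2 ?_
  fin_cases k
  · exact integrable_pow_gaussianReal 2
  · refine (((integrable_pow_gaussianReal 4).sub ((integrable_pow_gaussianReal 2).const_mul 2)).add
      (integrable_const 1)).congr (.of_forall fun x => ?_)
    simp only [Pi.add_apply, Pi.sub_apply, hermiteFn]
    ring

lemma integral_hermiteFn (k : Fin 2) : ∫ x, hermiteFn k x ∂gaussianReal 0 1 = 0 := by
  fin_cases k
  · simp [hermiteFn]
  · simp [hermiteFn, integral_sub (integrable_pow_gaussianReal 2) (integrable_const 1),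
      integral_pow_two_gaussianReal]

lemma integral_hermiteFn_mul (k l : Fin 2) :
    ∫ x, hermiteFn k x * hermiteFn l x ∂gaussianReal 0 1
      = if k = l then hermiteSqNorm k else 0 := by
  have hI := integrable_pow_gaussianReal
  have h13 : ∫ x, x * (x ^ 2 - 1) ∂gaussianReal 0 1 = 0 := by
    simp_rw [mul_sub, ← pow_succ', mul_one]
    rw [integral_sub (hI 3) (by simpa using hI 1), integral_pow_three_gaussianReal,
      integral_id_gaussianReal, sub_zero]
  fin_cases k <;> fin_cases l <;> simp only [hermiteFn, hermiteSqNorm] <;> norm_num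
  · simpa [sq] using integral_pow_two_gaussianReal
  · exact h13
  · simpa [mul_comm] using h13
  · have hexp : ∀ x : ℝ, (x ^ 2 - 1) * (x ^ 2 - 1) = x ^ 4 - 2 * x ^ 2 + 1 := fun x => by ring
    simp_rw [hexp]
    rw [integral_add (f := fun x => x ^ 4 - 2 * x ^ 2) ((hI 4).sub ((hI 2).const_mul 2))
        (integrable_const 1),
      integral_sub (hI 4) ((hI 2).const_mul 2), integral_const_mul,
      integral_pow_four_gaussianReal, integral_pow_two_gaussianReal]
    norm_num

section Pi

variable {ι : Type*} [Fintype ι] {X : ι → Type*} [∀ i, MeasurableSpace (X i)]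
  {μ : ∀ i, Measure (X i)} [∀ i, IsProbabilityMeasure (μ i)]

lemma integral_comp_eval_mul_comp_eval {j k : ι} (hjk : j ≠ k) {φ : X j → ℝ} {ψ : X k → ℝ}
    (hφ : Measurable φ) (hψ : Measurable ψ) :
    ∫ x, φ (x j) * ψ (x k) ∂Measure.pi μ = (∫ y, φ y ∂μ j) * ∫ y, ψ y ∂μ k := by
  have hind : iIndepFun (fun i (x : ∀ i, X i) => x i) (Measure.pi μ) :=
    iIndepFun_pi (X := fun _ => id) fun _ => aemeasurable_id
  have := ((hind.indepFun hjk).comp hφ hψ).integral_fun_mul_eq_mul_integral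
      (hφ.comp (measurable_pi_apply j)).aestronglyMeasurable
      (hψ.comp (measurable_pi_apply k)).aestronglyMeasurable
  simp only [Function.comp_apply] at this
  rw [this, integral_comp_eval hφ.aestronglyMeasurable, integral_comp_eval hψ.aestronglyMeasurable]

end Pi

section Tensor

variable {ι κ X : Type*}

def tensorFeature (h : κ → X → ℝ) : Option (κ × ι) → (ι → X) → ℝ
  | none, _ => 1
  | some (k, j), x => h k (x j)

def tensorWeight (c : κ → ℝ) : Option (κ × ι) → ℝ
  | none => 1
  | some (k, _) => c k

lemma tensorWeight_pos {c : κ → ℝ} (hc : ∀ k, 0 < c k) :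
    ∀ i : Option (κ × ι), 0 < tensorWeight c i
  | none => one_pos
  | some (k, _) => hc k

variable [Fintype ι] [MeasurableSpace X] {ν : Measure X} [IsProbabilityMeasure ν]
  {h : κ → X → ℝ}

lemma memLp_tensorFeature (hh : ∀ k, MemLp (h k) 2 ν) (i : Option (κ × ι)) :
    MemLp (tensorFeature h i) 2 (Measure.pi fun _ => ν) := by
  rcases i with _ | ⟨k, j⟩
  · exact memLp_const 1
  · exact (hh k).comp_measurePreserving (measurePreserving_eval _ j)

lemma integral_tensorFeature_mul [DecidableEq ι] [DecidableEq κ] {c : κ → ℝ}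
    (hm : ∀ k, Measurable (h k)) (hmean : ∀ k, ∫ y, h k y ∂ν = 0)
    (horth : ∀ k l, ∫ y, h k y * h l y ∂ν = if k = l then c k else 0) (i i' : Option (κ × ι)) :
    ∫ x, tensorFeature h i x * tensorFeature h i' x ∂Measure.pi (fun _ => ν)
      = if i = i' then tensorWeight c i else 0 := by
  have hcomp {φ : X → ℝ} (hφ : Measurable φ) (j : ι) :
      ∫ x, φ (x j) ∂Measure.pi (fun _ => ν) = ∫ y, φ y ∂ν :=
    integral_comp_eval (X := fun _ => X) hφ.aestronglyMeasurable
  rcases i with _ | ⟨k, j⟩ <;> rcases i' with _ | ⟨l, j'⟩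
  · simp [tensorFeature, tensorWeight]
  · simp [tensorFeature, hcomp (hm l), hmean]
  · simp [tensorFeature, hcomp (hm k), hmean]
  · obtain rfl | hjj' := eq_or_ne j j'
    · simp [tensorFeature, tensorWeight, horth,
        hcomp (φ := fun y => h k y * h l y) ((hm k).mul (hm l))]
    · simp [tensorFeature, integral_comp_eval_mul_comp_eval (X := fun _ => X) hjj' (hm k) (hm l),
        hmean, hjj']

end Tensor

section LeastSquares

variable {α ι : Type*} [Fintype ι] [MeasurableSpace α] {μ : Measure α} {e : ι → α → ℝ}

lemma integrable_mul_of_memLp_two {f g : α → ℝ} (hf : MemLp f 2 μ) (hg : MemLp g 2 μ) :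
    Integrable (fun x => f x * g x) μ :=
  hf.integrable_mul hg

lemma integral_sum_mul_eq_sum_mul_integral (he : ∀ i, MemLp (e i) 2 μ) {G : α → ℝ}
    (hG : MemLp G 2 μ) (a : ι → ℝ) :
    ∫ x, (∑ i, a i * e i x) * G x ∂μ = ∑ i, a i * ∫ x, e i x * G x ∂μ := by
  simp_rw [Finset.sum_mul, mul_assoc]
  rw [integral_finsetSum _ fun i _ => (integrable_mul_of_memLp_two (he i) hG).const_mul (a i)]
  simp_rw [integral_const_mul]

lemma memLp_sum_mul (he : ∀ i, MemLp (e i) 2 μ) (a : ι → ℝ) :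
    MemLp (fun x => ∑ i, a i * e i x) 2 μ :=
  memLp_finsetSum _ fun i _ => (he i).const_mul (a i)

variable [DecidableEq ι] {c : ι → ℝ}

lemma integral_sum_mul_of_orthogonal
    (he : ∀ i, MemLp (e i) 2 μ) (horth : ∀ i j, ∫ x, e i x * e j x ∂μ = if i = j then c i else 0)
    (a : ι → ℝ) (j : ι) :
    ∫ x, (∑ i, a i * e i x) * e j x ∂μ = c j * a j := by
  rw [integral_sum_mul_eq_sum_mul_integral he (he j)]
  simp [horth, mul_comm]

/-- Pythagoras in `L²(μ)`: `ht` says that `∑ i, t i • e i` is the orthogonal projection of `F`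
onto the span of `e`. -/
lemma integral_sq_sum_sub_eq (he : ∀ i, MemLp (e i) 2 μ)
    (horth : ∀ i j, ∫ x, e i x * e j x ∂μ = if i = j then c i else 0)
    {F : α → ℝ} (hF : MemLp F 2 μ) {t : ι → ℝ} (ht : ∀ i, c i * t i = ∫ x, e i x * F x ∂μ)
    (a : ι → ℝ) :
    ∫ x, (∑ i, a i * e i x - F x) ^ 2 ∂μ
      = ∫ x, (∑ i, t i * e i x - F x) ^ 2 ∂μ + ∑ i, c i * (a i - t i) ^ 2 := by
  have hP (b : ι → ℝ) := memLp_sum_mul he b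
  have hsq (b : ι → ℝ) : Integrable (fun x => (∑ i, b i * e i x - F x) ^ 2) μ :=
    ((hP b).sub hF).integrable_sq
  have hdiff : ∀ x, (∑ i, a i * e i x - F x) ^ 2 - (∑ i, t i * e i x - F x) ^ 2
      = (∑ i, (a i - t i) * e i x) * ((∑ i, (a i + t i) * e i x) - 2 * F x) := by
    intro x
    simp only [sub_mul, add_mul, Finset.sum_sub_distrib, Finset.sum_add_distrib]
    ring
  rw [← sub_eq_iff_eq_add', ← integral_sub (hsq a) (hsq t)]
  simp_rw [hdiff]
  rw [integral_sum_mul_eq_sum_mul_integral he (G := fun x => _ - 2 * F x)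
    ((hP _).sub (hF.const_mul 2))]
  refine Finset.sum_congr rfl fun i _ => ?_
  have hint : Integrable (fun x => e i x * (∑ j, (a j + t j) * e j x)) μ :=
    integrable_mul_of_memLp_two (he i) (hP _)
  rw [show (fun x => e i x * ((∑ j, (a j + t j) * e j x) - 2 * F x))
      = fun x => e i x * (∑ j, (a j + t j) * e j x) - 2 * (e i x * F x) by ext; ring,
    integral_sub hint ((integrable_mul_of_memLp_two (he i) hF).const_mul 2), integral_const_mul,
    ← ht]
  simp_rw [mul_comm (e i _)]
  rw [integral_sum_mul_of_orthogonal he horth]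
  ring

lemma integral_sq_sum_sub_le (he : ∀ i, MemLp (e i) 2 μ)
    (horth : ∀ i j, ∫ x, e i x * e j x ∂μ = if i = j then c i else 0) (hc : ∀ i, 0 ≤ c i)
    {F : α → ℝ} (hF : MemLp F 2 μ) {t : ι → ℝ} (ht : ∀ i, c i * t i = ∫ x, e i x * F x ∂μ)
    (a : ι → ℝ) :
    ∫ x, (∑ i, t i * e i x - F x) ^ 2 ∂μ ≤ ∫ x, (∑ i, a i * e i x - F x) ^ 2 ∂μ := by
  rw [integral_sq_sum_sub_eq he horth hF ht a, le_add_iff_nonneg_right]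
  exact Finset.sum_nonneg fun i _ => mul_nonneg (hc i) (sq_nonneg _)

lemma eq_of_integral_sq_sum_sub_le (he : ∀ i, MemLp (e i) 2 μ)
    (horth : ∀ i j, ∫ x, e i x * e j x ∂μ = if i = j then c i else 0) (hc : ∀ i, 0 < c i)
    {F : α → ℝ} (hF : MemLp F 2 μ) {t : ι → ℝ} (ht : ∀ i, c i * t i = ∫ x, e i x * F x ∂μ)
    {a : ι → ℝ}
    (ha : ∫ x, (∑ i, a i * e i x - F x) ^ 2 ∂μ ≤ ∫ x, (∑ i, t i * e i x - F x) ^ 2 ∂μ) :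
    a = t := by
  rw [integral_sq_sum_sub_eq he horth hF ht a, add_le_iff_nonpos_right] at ha
  have hterm (i : ι) : 0 ≤ c i * (a i - t i) ^ 2 := mul_nonneg (hc i).le (sq_nonneg _)
  have hzero := (Finset.sum_eq_zero_iff_of_nonneg fun i _ => hterm i).1
    (le_antisymm ha (Finset.sum_nonneg fun i _ => hterm i))
  funext i
  have := hzero i (Finset.mem_univ i)
  rw [mul_eq_zero, sq_eq_zero_iff, sub_eq_zero] at this
  exact this.resolve_left (hc i).ne'

end LeastSquares

section Quadratic

variable {d : ℕ}

def hermiteCoeff (μ σ : Fin d → ℝ) (b0 : ℝ) (b1 b2 : Fin d → ℝ) : Option (Fin 2 × Fin d) → ℝ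
  | none => b0 + ∑ j, (b1 j * μ j + b2 j * (μ j ^ 2 + σ j ^ 2))
  | some (0, j) => (b1 j + 2 * b2 j * μ j) * σ j
  | some (1, j) => b2 j * σ j ^ 2

lemma quadratic_eq_sum_hermiteCoeff (μ σ : Fin d → ℝ) (b0 : ℝ) (b1 b2 z : Fin d → ℝ) :
    b0 + b1 ⬝ᵥ (μ + σ * z) + ∑ j, b2 j * ((μ + σ * z) j) ^ 2
      = ∑ i, hermiteCoeff μ σ b0 b1 b2 i * tensorFeature hermiteFn i z := by
  rw [Fintype.sum_option, Fintype.sum_prod_type, Fin.sum_univ_two]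
  simp only [hermiteCoeff, tensorFeature, hermiteFn, dotProduct, Pi.add_apply, Pi.mul_apply,
    mul_one, add_assoc, ← Finset.sum_add_distrib]
  rw [add_right_inj]
  refine Finset.sum_congr rfl fun j _ => ?_
  ring

lemma hermiteCoeff_injective {μ σ : Fin d → ℝ} (hσ : ∀ j, σ j ≠ 0) {b0 b0' : ℝ}
    {b1 b1' b2 b2' : Fin d → ℝ}
    (h : hermiteCoeff μ σ b0 b1 b2 = hermiteCoeff μ σ b0' b1' b2') :
    b0 = b0' ∧ b1 = b1' ∧ b2 = b2' := by
  have h2 : b2 = b2' := funext fun j =>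
    mul_right_cancel₀ (pow_ne_zero 2 (hσ j)) (congr_fun h (some (1, j)))
  subst h2
  have h1 : b1 = b1' := funext fun j =>
    add_right_cancel (mul_right_cancel₀ (hσ j) (congr_fun h (some (0, j))))
  subst h1
  exact ⟨add_right_cancel (congr_fun h none), rfl, rfl⟩

end Quadratic

lemma memLp_hermiteFeature {d : ℕ} (i : Option (Fin 2 × Fin d)) :
    MemLp (tensorFeature hermiteFn i) 2 (stdGaussian d) :=
  memLp_tensorFeature memLp_hermiteFn i

lemma integral_hermiteFeature_mul {d : ℕ} (i i' : Option (Fin 2 × Fin d)) :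
    ∫ z, tensorFeature hermiteFn i z * tensorFeature hermiteFn i' z ∂stdGaussian d
      = if i = i' then tensorWeight hermiteSqNorm i else 0 :=
  integral_tensorFeature_mul measurable_hermiteFn integral_hermiteFn integral_hermiteFn_mul i i'

/-- Mean-field least squares: with `X = μ + σ ⊙ Z`, `Z ∼ N(0, I_d)`,
`σ_j > 0` and `E[f(X)²] < ∞`, set `γ⁰ = E[f(X)]`, `γ¹_j = E[Z_j f(X)]`,
`γ²_j = E[(Z_j² − 1) f(X)]/√2`, `β²_j = γ²_j/(√2 σ_j²)`, `β¹_j = γ¹_j/σ_j − 2 β²_j μ_j`,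
`β⁰ = γ⁰ − β¹ ⬝ μ − Σ_j β²_j (μ_j² + σ_j²)`. Then `β = (β⁰, β¹, β²)` is the unique
minimiser of `β' ↦ E[(β'⁰ + β'¹ ⬝ X + Σ_j β'²_j X_j² − f(X))²]`. -/
theorem stmt10
    {d : ℕ} (μv σ : Fin d → ℝ) (hσ : ∀ j, 0 < σ j)
    (f : (Fin d → ℝ) → ℝ) (hf : Measurable f)
    (hfL2 : Integrable (fun z => (f (μv + σ * z)) ^ 2) (stdGaussian d))
    (γ0 : ℝ) (hγ0 : γ0 = ∫ z, f (μv + σ * z) ∂stdGaussian d)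
    (γ1 : Fin d → ℝ) (hγ1 : γ1 = fun j => ∫ z, z j * f (μv + σ * z) ∂stdGaussian d)
    (γ2 : Fin d → ℝ)
    (hγ2 : γ2 = fun j => (∫ z, ((z j) ^ 2 - 1) * f (μv + σ * z) ∂stdGaussian d) / Real.sqrt 2)
    (β2 : Fin d → ℝ) (hβ2 : β2 = fun j => γ2 j / (Real.sqrt 2 * (σ j) ^ 2))
    (β1 : Fin d → ℝ) (hβ1 : β1 = fun j => γ1 j / σ j - 2 * β2 j * μv j)
    (β0 : ℝ) (hβ0 : β0 = γ0 - β1 ⬝ᵥ μv - ∑ j, β2 j * ((μv j) ^ 2 + (σ j) ^ 2)) :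
    -- `β` minimises the least-squares objective ...
    (∀ (b0 : ℝ) (b1 b2 : Fin d → ℝ),
      (∫ z, (β0 + β1 ⬝ᵥ (μv + σ * z) + (∑ j, β2 j * ((μv + σ * z) j) ^ 2)
          - f (μv + σ * z)) ^ 2 ∂stdGaussian d)
        ≤ ∫ z, (b0 + b1 ⬝ᵥ (μv + σ * z) + (∑ j, b2 j * ((μv + σ * z) j) ^ 2)
            - f (μv + σ * z)) ^ 2 ∂stdGaussian d)
    ∧
    -- ... and it is the unique such minimiser
    (∀ (b0 : ℝ) (b1 b2 : Fin d → ℝ),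
      (∀ (c0 : ℝ) (c1 c2 : Fin d → ℝ),
        (∫ z, (b0 + b1 ⬝ᵥ (μv + σ * z) + (∑ j, b2 j * ((μv + σ * z) j) ^ 2)
            - f (μv + σ * z)) ^ 2 ∂stdGaussian d)
          ≤ ∫ z, (c0 + c1 ⬝ᵥ (μv + σ * z) + (∑ j, c2 j * ((μv + σ * z) j) ^ 2)
              - f (μv + σ * z)) ^ 2 ∂stdGaussian d) →
      b0 = β0 ∧ b1 = β1 ∧ b2 = β2) := by
  have hF : MemLp (fun z => f (μv + σ * z)) 2 (stdGaussian d) :=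
    (memLp_two_iff_integrable_sq (hf.comp (by fun_prop)).aestronglyMeasurable).2 hfL2
  have hβ : ∀ i, tensorWeight hermiteSqNorm i * hermiteCoeff μv σ β0 β1 β2 i
      = ∫ z, tensorFeature hermiteFn i z * f (μv + σ * z) ∂stdGaussian d := by
    rintro (_ | ⟨k, j⟩)
    · simp [tensorWeight, hermiteCoeff, tensorFeature, hβ0, hγ0, dotProduct,
        Finset.sum_add_distrib]
    · fin_cases k
      · simp only [tensorWeight, hermiteSqNorm, zero_add, Nat.factorial_one, Nat.cast_one,
          hermiteCoeff, hβ1, hγ1, sub_add_cancel, one_mul, tensorFeature, hermiteFn]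
        field_simp [(hσ j).ne']
      · simp only [tensorWeight, hermiteSqNorm, Nat.reduceAdd, Nat.factorial_two, Nat.cast_ofNat,
          hermiteCoeff, hβ2, hγ2, tensorFeature, hermiteFn]
        field_simp [(hσ j).ne']
        rw [Real.sq_sqrt zero_le_two, mul_comm]
  have hc := tensorWeight_pos (ι := Fin d) hermiteSqNorm_pos
  simp_rw [quadratic_eq_sum_hermiteCoeff μv σ]
  refine ⟨fun b0 b1 b2 => integral_sq_sum_sub_le memLp_hermiteFeature integral_hermiteFeature_mul
    (fun i => (hc i).le) hF hβ _, fun b0 b1 b2 hb => hermiteCoeff_injective (fun j => (hσ j).ne')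
    (eq_of_integral_sq_sum_sub_le memLp_hermiteFeature integral_hermiteFeature_mul hc hF hβ
      (hb β0 β1 β2))⟩
end
end
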